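/- arXiv:1703.00345 — 7 statements merged into one kernel-verified Lean document; each statement's English description precedes it below -/
import Mathlib

section
/- There is no nontrivial regular (216, 40, 4, 8)-partial difference set in any abelian group of order 216. That is, if G is an abelian group with |G| = 216, there exists no subset D of G with |D| = 40, e ∉ D, D = {d⁻¹ : d ∈ D}, such that every non-identity g ∈ D has exactly 4 representations g = a·b⁻¹ with a, b ∈ D and every non-identity g ∉ D has exactly 8 such representations, where neither D ∪ {e} nor G \ D is a subgroup of G. -/
/-- The number of representations of `g` as `a * b⁻¹` with `a, b ∈ D`. -/
def diffReps {G : Type*} [Group G] [DecidableEq G] (D : Finset G) (g : G) : ℕ :=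
  ((D ×ˢ D).filter (fun p => p.1 * p.2⁻¹ = g)).card

/-- `D` is a `(v, k, λ, μ)`-partial difference set in the finite group `G`. -/
def IsPDS {G : Type*} [Group G] [Fintype G] [DecidableEq G]
    (D : Finset G) (v k l m : ℕ) : Prop :=
  Fintype.card G = v ∧ D.card = k ∧
  ∀ g : G, g ≠ 1 →
    (g ∈ D → diffReps D g = l) ∧ (g ∉ D → diffReps D g = m)

/-- `D` is regular: it does not contain the identity and is closed under inverses. -/
def IsRegularPDS {G : Type*} [Group G] (D : Finset G) : Prop :=
  (1 : G) ∉ D ∧ ∀ d : G, d ∈ D ↔ d⁻¹ ∈ D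

/-- A regular PDS `D` is trivial if `D ∪ {e}` or `G \ D` is a subgroup of `G`. -/
def IsTrivialPDS {G : Type*} [Group G] (D : Finset G) : Prop :=
  (∃ H : Subgroup G, (H : Set G) = insert (1 : G) ↑D) ∨
  (∃ H : Subgroup G, (H : Set G) = (↑D : Set G)ᶜ)

/-!
Let `P` be a Sylow 2-subgroup of `G` and `Q = G ⧸ P`, so `|P| = 8` and `|Q| = 27`. In the group
ring the PDS equation reads `D² = 32 + 8G - 4D`; its image `f` in `ℤ[Q]` satisfies
`f² = 32 + 64Q - 4f` and `Qf = 40Q`, hence `h = 3f + 6 - 4Q` satisfies `h² = 324`.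

In an abelian group of odd order, `(a²)(x²) ≡ a(x)² (mod 2)`: the involution `z ↦ z⁻¹x²` pairs off
all terms of the convolution except `z = x`. Applied to `h` and then to `h / 2`, this gives
`4 ∣ h(x)` for `x ≠ 1`, while `h(x) = 3f(x) - 4 ≠ 0` there. Since `h` is symmetric,
`324 = (h²)(1) = ∑ h(x)² ≥ 26 · 16`, a contradiction.
-/

open Finset MonoidAlgebra

noncomputable def Finset.toGroupRing {G : Type*} (s : Finset G) : ℤ[G] := ∑ g ∈ s, single g 1

section GroupRing

variable {G H : Type*}

lemma Finset.coeff_toGroupRing [DecidableEq G] (s : Finset G) (g : G) :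
    s.toGroupRing.coeff g = if g ∈ s then 1 else 0 := by
  simp [toGroupRing, Finsupp.single_apply]

lemma Finset.coeff_toGroupRing_mul_toGroupRing [Monoid G] [DecidableEq G] (s t : Finset G)
    (g : G) : (s.toGroupRing * t.toGroupRing).coeff g = #{p ∈ s ×ˢ t | p.1 * p.2 = g} := by
  simp [toGroupRing, sum_mul_sum, single_mul_single, Finsupp.single_apply, ← sum_product']

lemma coeff_mul_eq_sum {R : Type*} [Semiring R] [Group G] [Fintype G] (x y : R[G]) (g : G) :
    (x * y).coeff g = ∑ z, x.coeff z * y.coeff (z⁻¹ * g) := by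
  rw [coeff_mul_apply_left, Finsupp.sum_fintype _ _ (by simp)]

lemma coeff_mul_self_one_eq_sum_sq [Group G] [Fintype G] {a : ℤ[G]}
    (hsym : ∀ x, a.coeff x⁻¹ = a.coeff x) : (a * a).coeff 1 = ∑ x, a.coeff x ^ 2 := by
  simp [coeff_mul_eq_sum, hsym, sq]

lemma univ_toGroupRing_mul_sum_single [Group G] [Fintype G] {ι : Type*} (s : Finset ι)
    (u : ι → G) : univ.toGroupRing * ∑ i ∈ s, single (u i) (1 : ℤ) = #s • univ.toGroupRing := by
  have hmul_single : ∀ a : G, univ.toGroupRing * single a (1 : ℤ) = univ.toGroupRing := fun a => by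
    simp only [toGroupRing, sum_mul, single_mul_single, mul_one]
    exact Fintype.sum_equiv (Equiv.mulRight a) _ _ (fun _ => rfl)
  simp [mul_sum, hmul_single]

lemma map_toGroupRing [Monoid G] [Monoid H] (f : G →* H) (s : Finset G) :
    mapDomainRingHom ℤ f s.toGroupRing = ∑ g ∈ s, single (f g) 1 := by
  simp [toGroupRing]

lemma coeff_map_toGroupRing [Monoid G] [Monoid H] [DecidableEq H] (f : G →* H)
    (s : Finset G) (h : H) : (mapDomainRingHom ℤ f s.toGroupRing).coeff h = #{g ∈ s | f g = h} := by
  rw [map_toGroupRing]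
  simp [Finsupp.single_apply]

lemma map_univ_toGroupRing [Group G] [Fintype G] [Group H] [Fintype H] [DecidableEq H]
    (f : G →* H) (hf : Function.Surjective f) :
    mapDomainRingHom ℤ f univ.toGroupRing = Nat.card f.ker • univ.toGroupRing := by
  ext h
  have hfiber : #{g | f g = h} = #{g | f g = 1} :=
    MonoidHom.card_fiber_eq_of_mem_range f (hf h) ⟨1, map_one f⟩
  simp only [coeff_map_toGroupRing, coeff_smul_apply, coeff_toGroupRing, mem_univ, if_true,
    hfiber, ← MonoidHom.mem_ker, Nat.card_eq_fintype_card, Fintype.card_subtype]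
  simp

lemma coeff_map_toGroupRing_inv [Group G] [Group H] [DecidableEq H]
    (f : G →* H) {D : Finset G} (hinv : ∀ d : G, d ∈ D ↔ d⁻¹ ∈ D) (h : H) :
    (mapDomainRingHom ℤ f D.toGroupRing).coeff h⁻¹ =
      (mapDomainRingHom ℤ f D.toGroupRing).coeff h := by
  simp only [coeff_map_toGroupRing, Nat.cast_inj]
  refine card_nbij' (·⁻¹) (·⁻¹) ?_ ?_ (fun g _ => inv_inv g) (fun g _ => inv_inv g) <;>
    intro g hg <;> simp only [coe_filter, Set.mem_ofPred_eq] at hg ⊢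
  · exact ⟨(hinv g).1 hg.1, by rw [map_inv, hg.2, inv_inv]⟩
  · exact ⟨(hinv g).1 hg.1, by rw [map_inv, hg.2]⟩

end GroupRing

section PartialDifferenceSet

variable {G : Type*} [Group G] [DecidableEq G]

lemma card_filter_mul_eq_diffReps {D : Finset G} (hinv : ∀ d : G, d ∈ D ↔ d⁻¹ ∈ D) (g : G) :
    #{p ∈ D ×ˢ D | p.1 * p.2 = g} = diffReps D g := by
  refine card_nbij' (fun p => (p.1, p.2⁻¹)) (fun p => (p.1, p.2⁻¹)) ?_ ?_ ?_ ?_ <;>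
    intro p hp <;> simp only [coe_filter, mem_product, Set.mem_ofPred_eq] at hp ⊢
  · exact ⟨⟨hp.1.1, (hinv _).1 hp.1.2⟩, by simpa using hp.2⟩
  · exact ⟨⟨hp.1.1, (hinv _).1 hp.1.2⟩, hp.2⟩
  · simp
  · simp

lemma diffReps_one (D : Finset G) : diffReps D 1 = #D := by
  have hdiag : {p ∈ D ×ˢ D | p.1 * p.2⁻¹ = 1} = D.diag := by
    ext p
    simp only [mem_filter, mem_product, mem_diag, mul_inv_eq_one]
    constructor
    · exact fun h => ⟨h.1.1, h.2⟩
    · exact fun h => ⟨⟨h.1, h.2 ▸ h.1⟩, h.2⟩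
  rw [diffReps, hdiag, diag_card]

theorem IsPDS.toGroupRing_mul_self [Fintype G] {D : Finset G} {v k l m : ℕ}
    (hD : IsPDS D v k l m) (hreg : IsRegularPDS D) :
    D.toGroupRing * D.toGroupRing =
      ((k - m : ℤ) : ℤ[G]) + m • univ.toGroupRing + ((l : ℤ) - m) • D.toGroupRing := by
  obtain ⟨-, hk, hreps⟩ := hD
  obtain ⟨h1, hinv⟩ := hreg
  ext g
  rw [coeff_toGroupRing_mul_toGroupRing, card_filter_mul_eq_diffReps hinv, intCast_def]
  simp only [coeff_add, coeff_smul, Finsupp.add_apply, Finsupp.smul_apply, coeff_toGroupRing,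
    coeff_single, Finsupp.single_apply, mem_univ, if_true]
  by_cases hg : g = 1
  · subst hg; simp [diffReps_one, hk, h1]
  · by_cases hgD : g ∈ D
    · simp [Ne.symm hg, hgD, (hreps g hg).1 hgD]
    · simp [Ne.symm hg, hgD, (hreps g hg).2 hgD]

end PartialDifferenceSet

section OddOrder

variable {Q : Type*} [CommGroup Q] [Fintype Q] [DecidableEq Q]

lemma sum_mul_inv_mul_sq_eq_sq {R : Type*} [CommRing R] [CharP R 2]
    (hQ : (Nat.card Q).Coprime 2) (F : Q → R) (x : Q) :
    ∑ z, F z * F (z⁻¹ * x ^ 2) = F x ^ 2 := by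
  have hinvol : ∀ z : Q, (z⁻¹ * x ^ 2)⁻¹ * x ^ 2 = z := fun z => by
    rw [mul_inv_rev, inv_inv, mul_comm, mul_inv_cancel_left]
  rw [← add_sum_erase _ _ (mem_univ x), inv_mul_eq_of_eq_mul (sq x), ← sq, add_eq_left]
  refine sum_involution (fun z _ => z⁻¹ * x ^ 2) (fun z _ => ?_) (fun z hz _ hfix => ?_)
    (fun z hz => mem_erase.2 ⟨fun hx => ?_, mem_univ _⟩) (fun z _ => hinvol z)
  · rw [hinvol, mul_comm (F _), CharTwo.add_self_eq_zero]
  · exact ne_of_mem_erase hz (hQ.pow_left_bijective.1 (by simpa [sq] using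
      (inv_mul_eq_iff_eq_mul.1 hfix).symm))
  · have hz' := hinvol z
    rw [hx, inv_mul_eq_of_eq_mul (sq x)] at hz'
    exact ne_of_mem_erase hz hz'.symm

lemma two_dvd_coeff_mul_self_sq_iff (hQ : (Nat.card Q).Coprime 2) (a : ℤ[Q]) (x : Q) :
    2 ∣ (a * a).coeff (x ^ 2) ↔ 2 ∣ a.coeff x := by
  have hmod := congrArg (Int.cast : ℤ → ZMod 2) (coeff_mul_eq_sum a a (x ^ 2))
  push_cast at hmod
  rw [sum_mul_inv_mul_sq_eq_sq hQ (fun z => (a.coeff z : ZMod 2)) x] at hmod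
  have hdvd : ∀ n : ℤ, 2 ∣ n ↔ (n : ZMod 2) = 0 := fun n =>
    (ZMod.intCast_zmod_eq_zero_iff_dvd n 2).symm
  rw [hdvd, hdvd, hmod, pow_eq_zero_iff two_ne_zero]

lemma four_dvd_coeff_of_mul_self_eq (hQ : (Nat.card Q).Coprime 2) {a : ℤ[Q]} {c : ℤ}
    (ha : a * a = single 1 (4 * c)) {x : Q} (hx : x ≠ 1) : 4 ∣ a.coeff x := by
  have heven : ∀ y, 2 ∣ a.coeff y := fun y => (two_dvd_coeff_mul_self_sq_iff hQ a y).1 <| by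
    rw [ha, coeff_single, Finsupp.single_apply]
    split_ifs <;> omega
  set b : ℤ[Q] := ofCoeff (Finsupp.equivFunOnFinite.symm fun y => a.coeff y / 2)
  have hab : a = (2 : ℤ) • b := by
    ext y
    rw [coeff_smul_apply]
    simp [b, Int.mul_ediv_cancel' (heven y)]
  have hb : b * b = single 1 c := by
    ext y
    have hy := congrArg (coeff · y) ha
    rw [hab, smul_mul_smul] at hy
    simp only [coeff_smul_apply, coeff_single, Finsupp.single_apply, smul_eq_mul] at hy ⊢
    split_ifs at hy ⊢ <;> omega
  have hx2 : x ^ 2 ≠ 1 := fun h => hx (hQ.pow_left_bijective.1 (h.trans (one_pow 2).symm))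
  obtain ⟨t, ht⟩ := (two_dvd_coeff_mul_self_sq_iff hQ b x).1 <| by
    simp [hb, Ne.symm hx2]
  exact ⟨t, by rw [hab, coeff_smul_apply, ht, smul_eq_mul]; ring⟩

end OddOrder

lemma mul_self_ne_of_card_eq_27 {Q : Type*} [CommGroup Q] [Fintype Q] [DecidableEq Q]
    (hQ : Nat.card Q = 27) (f : ℤ[Q]) (hsym : ∀ x, f.coeff x⁻¹ = f.coeff x)
    (hsum : univ.toGroupRing * f = 40 * univ.toGroupRing) :
    f * f ≠ 32 + 64 * univ.toGroupRing - 4 * f := by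
  intro hsq
  set J : ℤ[Q] := univ.toGroupRing
  have hJJ : J * J = 27 * J := by
    have := univ_toGroupRing_mul_sum_single (univ : Finset Q) id
    simpa [J, Finset.toGroupRing, ← Nat.card_eq_fintype_card, hQ, nsmul_eq_mul] using this
  set h : ℤ[Q] := 3 * f + 6 - 4 * J
  have hh : h * h = single 1 (4 * 81) := by
    rw [show single (1 : Q) (4 * 81 : ℤ) = ((4 * 81 : ℤ) : ℤ[Q]) from (intCast_def _).symm]
    push_cast
    linear_combination 9 * hsq - 24 * hsum + 16 * hJJ
  have hcoeff : ∀ x, x ≠ 1 → h.coeff x = 3 * f.coeff x - 4 := by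
    intro x hx
    simp [h, J, ofNat_def, coeff_toGroupRing, hx]
  have hbig : ∀ x, x ≠ 1 → 16 ≤ h.coeff x ^ 2 := by
    intro x hx
    obtain ⟨t, ht⟩ := four_dvd_coeff_of_mul_self_eq (by rw [hQ]; norm_num) hh hx
    have ht0 : t ≠ 0 := by have := hcoeff x hx; omega
    have : 0 < t ^ 2 := by positivity
    rw [ht]
    nlinarith
  have hsymh : ∀ x, h.coeff x⁻¹ = h.coeff x := by
    intro x
    by_cases hx : x = 1
    · rw [hx, inv_one]
    · rw [hcoeff x hx, hcoeff x⁻¹ (inv_ne_one.2 hx), hsym]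
  have hnorm : ∑ x, h.coeff x ^ 2 = 324 := by
    rw [← coeff_mul_self_one_eq_sum_sq hsymh, hh]
    simp
  have hcard : #(univ.erase (1 : Q)) = 26 := by
    rw [card_erase_of_mem (mem_univ _), card_univ, ← Nat.card_eq_fintype_card, hQ]
  have hlower : 26 • 16 ≤ ∑ x, h.coeff x ^ 2 := calc
    26 • 16 = #(univ.erase (1 : Q)) • (16 : ℤ) := by rw [hcard]
    _ ≤ ∑ x ∈ univ.erase 1, h.coeff x ^ 2 :=
      card_nsmul_le_sum _ _ _ fun x hx => hbig x (ne_of_mem_erase hx)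
    _ ≤ ∑ x, h.coeff x ^ 2 :=
      sum_le_sum_of_subset_of_nonneg (erase_subset _ _) fun _ _ _ => sq_nonneg _
  rw [hnorm] at hlower
  norm_num at hlower

theorem no_216_40_4_8_PDS (G : Type*) [CommGroup G] [Fintype G] [DecidableEq G]
    (hG : Fintype.card G = 216) :
    ¬ ∃ D : Finset G, IsPDS D 216 40 4 8 ∧ IsRegularPDS D ∧ ¬ IsTrivialPDS D := by
  rintro ⟨D, hD, hreg, -⟩
  obtain ⟨P, hP⟩ := Sylow.exists_subgroup_card_pow_prime (G := G) 2 (n := 3)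
    (by rw [Nat.card_eq_fintype_card, hG]; norm_num)
  classical
  let _ : Fintype (G ⧸ P) := Fintype.ofFinite _
  have hQ : Nat.card (G ⧸ P) = 27 := by
    have := P.card_eq_card_quotient_mul_card_subgroup
    rw [Nat.card_eq_fintype_card, hG, hP] at this
    omega
  let φ := mapDomainRingHom ℤ (QuotientGroup.mk' P)
  refine mul_self_ne_of_card_eq_27 hQ (φ D.toGroupRing) (coeff_map_toGroupRing_inv _ hreg.2) ?_ ?_
  · rw [map_toGroupRing, univ_toGroupRing_mul_sum_single, hD.2.1, nsmul_eq_mul]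
    norm_num
  · rw [← map_mul, hD.toGroupRing_mul_self hreg, map_add, map_add, map_nsmul, map_zsmul,
      map_univ_toGroupRing _ (QuotientGroup.mk'_surjective P), QuotientGroup.ker_mk', hP]
    simp only [map_intCast, nsmul_eq_mul, zsmul_eq_mul]
    push_cast
    ring
end

section
/- There is no nontrivial regular (216, 43, 10, 8)-partial difference set in any abelian group of order 216. That is, if G is an abelian group with |G| = 216, there exists no subset D of G with |D| = 43, e ∉ D, D = {d⁻¹ : d ∈ D}, such that every non-identity g ∈ D has exactly 10 representations g = a·b⁻¹ with a, b ∈ D and every non-identity g ∉ D has exactly 8 such representations, where neither D ∪ {e} nor G \ D is a subgroup of G. -/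
open Finset

section Auxiliary

private lemma grp_aux {H : Type*} [Group H] {u b y : H} : u * b⁻¹ = y ↔ b = y⁻¹ * u := by
  constructor
  · intro h; rw [← h]; group
  · intro h; rw [h]; group


variable {Q : Type*} [CommGroup Q] [Fintype Q] [DecidableEq Q]

lemma key_quotient (hQ : Fintype.card Q = 27) (f : Q → ℕ)
    (hsym : ∀ y : Q, f y⁻¹ = f y) (hf1 : f 1 ≤ 7)
    (hsum : ∑ y : Q, f y = 43)
    (hconv : ∀ y : Q, ∑ u : Q, f u * f (y⁻¹ * u)
      = 64 + 2 * f y + (if y = 1 then 35 else 0)) : False := by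
  classical
  have hcardA : Fintype.card (Additive Q) = 27 := by
    rw [Fintype.card_additive]; exact hQ
  set F : AddChar (Additive Q) ℂ → ℂ :=
    fun ψ => ∑ y : Q, (f y : ℂ) * ψ (Additive.ofMul y) with hFdef
  have hofMulSum : ∀ ψ : AddChar (Additive Q) ℂ,
      ∑ y : Q, ψ (Additive.ofMul y) = ∑ a : Additive Q, ψ a :=
    fun ψ => Fintype.sum_equiv Additive.ofMul _ _ fun y => rfl
  have hF0 : F 0 = 43 := by
    simp only [hFdef, AddChar.zero_apply, mul_one]
    rw [← Nat.cast_sum, hsum]; norm_num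
  have hFsymm : ∀ ψ : AddChar (Additive Q) ℂ,
      ∑ y : Q, (f y : ℂ) * ψ (Additive.ofMul y⁻¹) = F ψ := by
    intro ψ
    rw [hFdef]
    refine Fintype.sum_equiv (Equiv.inv Q) _ _ fun y => ?_
    simp [hsym]
  have hquad : ∀ ψ : AddChar (Additive Q) ℂ, ψ ≠ 0 → F ψ = 7 ∨ F ψ = -5 := by
    intro ψ hψ
    have hsum0 : ∑ y : Q, ψ (Additive.ofMul y) = 0 := by
      rw [hofMulSum]; exact AddChar.sum_eq_zero_iff_ne_zero.mpr hψ
    have key : F ψ * F ψ = 2 * F ψ + 35 := by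
      have lhs1 : ∑ y : Q, ((∑ u : Q, (f u : ℂ) * f (y⁻¹ * u)) * ψ (Additive.ofMul y))
          = F ψ * F ψ := by
        calc ∑ y : Q, ((∑ u : Q, (f u : ℂ) * f (y⁻¹ * u)) * ψ (Additive.ofMul y))
            = ∑ y : Q, ∑ u : Q, (f u : ℂ) * f (y⁻¹ * u) * ψ (Additive.ofMul y) := by
              exact Finset.sum_congr rfl fun y _ => Finset.sum_mul _ _ _
          _ = ∑ u : Q, ∑ y : Q, (f u : ℂ) * f (y⁻¹ * u) * ψ (Additive.ofMul y) :=
              Finset.sum_comm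
          _ = ∑ u : Q, (f u : ℂ) * ψ (Additive.ofMul u)
                * ∑ v : Q, (f v : ℂ) * ψ (Additive.ofMul v⁻¹) := by
              refine Finset.sum_congr rfl fun u _ => ?_
              rw [Finset.mul_sum]
              refine Fintype.sum_equiv ((Equiv.inv Q).trans (Equiv.mulLeft u)) _ _ fun v => ?_
              simp only [Equiv.trans_apply, Equiv.inv_apply, Equiv.coe_mulLeft]
              have e2 : ψ (Additive.ofMul u) * ψ (Additive.ofMul (u * v⁻¹)⁻¹)
                  = ψ (Additive.ofMul v) := by
                rw [← AddChar.map_add_eq_mul]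
                show ψ (Additive.ofMul (u * (u * v⁻¹)⁻¹)) = _
                congr 1
                show Additive.ofMul (u * (u * v⁻¹)⁻¹) = Additive.ofMul v
                congr 1
                simp [mul_comm, mul_left_comm, mul_assoc]
              calc (f u : ℂ) * f (v⁻¹ * u) * ψ (Additive.ofMul v)
                  = (f u : ℂ) * f (u * v⁻¹)
                    * (ψ (Additive.ofMul u) * ψ (Additive.ofMul (u * v⁻¹)⁻¹)) := by
                    rw [e2, mul_comm v⁻¹ u]
                _ = (f u : ℂ) * ψ (Additive.ofMul u)
                    * ((f (u * v⁻¹) : ℂ) * ψ (Additive.ofMul (u * v⁻¹)⁻¹)) := by ring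
          _ = (∑ u : Q, (f u : ℂ) * ψ (Additive.ofMul u))
                * ∑ v : Q, (f v : ℂ) * ψ (Additive.ofMul v⁻¹) := by
              rw [← Finset.sum_mul]
          _ = F ψ * F ψ := by rw [hFsymm ψ]
      have cast1 : ∀ y : Q, (∑ u : Q, (f u : ℂ) * f (y⁻¹ * u))
          = 64 + 2 * (f y : ℂ) + (if y = 1 then 35 else 0) := by
        intro y
        have h := hconv y
        calc ∑ u : Q, (f u : ℂ) * f (y⁻¹ * u)
            = ((∑ u : Q, f u * f (y⁻¹ * u) : ℕ) : ℂ) := by push_cast; rfl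
          _ = ((64 + 2 * f y + (if y = 1 then 35 else 0) : ℕ) : ℂ) := by rw [h]
          _ = 64 + 2 * (f y : ℂ) + (if y = 1 then 35 else 0) := by
              push_cast [apply_ite (fun n : ℕ => (n : ℂ))]; norm_num
      have lhs2 : ∑ y : Q, ((∑ u : Q, (f u : ℂ) * f (y⁻¹ * u)) * ψ (Additive.ofMul y))
          = 2 * F ψ + 35 := by
        calc ∑ y : Q, ((∑ u : Q, (f u : ℂ) * f (y⁻¹ * u)) * ψ (Additive.ofMul y))
            = ∑ y : Q, (64 * ψ (Additive.ofMul y) + 2 * ((f y : ℂ) * ψ (Additive.ofMul y))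
                + (if y = 1 then (35 : ℂ) * ψ (Additive.ofMul y) else 0)) := by
              refine Finset.sum_congr rfl fun y _ => ?_
              rw [cast1 y]
              split <;> ring
          _ = 64 * ∑ y : Q, ψ (Additive.ofMul y)
              + 2 * ∑ y : Q, (f y : ℂ) * ψ (Additive.ofMul y)
              + ∑ y : Q, (if y = 1 then (35 : ℂ) * ψ (Additive.ofMul y) else 0) := by
              rw [Finset.sum_add_distrib, Finset.sum_add_distrib, Finset.mul_sum,
                Finset.mul_sum]
          _ = 2 * F ψ + 35 := by
              rw [hsum0, Finset.sum_ite_eq' univ (1 : Q)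
                (fun y => (35 : ℂ) * ψ (Additive.ofMul y))]
              simp [hFdef]
      rw [← lhs1, lhs2]
    have hfact : (F ψ - 7) * (F ψ + 5) = 0 := by linear_combination key
    rcases mul_eq_zero.mp hfact with h | h
    · exact Or.inl (by linear_combination h)
    · exact Or.inr (by linear_combination h)
  -- the exceptional set of characters
  set S : Finset (AddChar (Additive Q) ℂ) :=
    univ.filter (fun ψ => ψ ≠ 0 ∧ F ψ = -5) with hSdef
  set s : ℕ := S.card with hsdef
  have hFdecomp : ∀ ψ : AddChar (Additive Q) ℂ,
      F ψ = 7 + (if ψ = 0 then (36 : ℂ) else 0) + (if ψ ∈ S then (-12 : ℂ) else 0) := by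
    intro ψ
    by_cases h0 : ψ = 0
    · have h0S : ψ ∉ S := by
        subst h0; simp only [hSdef, mem_filter, mem_univ, true_and]
        rintro ⟨h, -⟩; exact h rfl
      rw [h0, hF0, if_pos rfl, if_neg (h0 ▸ h0S)]; norm_num
    · rcases hquad ψ h0 with h | h
      · have hS : ψ ∉ S := by
          simp only [hSdef, mem_filter, mem_univ, true_and]
          rintro ⟨-, h5⟩; rw [h] at h5; norm_num at h5
        rw [h, if_neg h0, if_neg hS]; norm_num
      · have hS : ψ ∈ S := by
          simp only [hSdef, mem_filter, mem_univ, true_and]; exact ⟨h0, h⟩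
        rw [h, if_neg h0, if_pos hS]; norm_num
  -- Fourier inversion
  have hinv : ∀ x : Q, ∑ ψ : AddChar (Additive Q) ℂ, F ψ * ψ (Additive.ofMul x⁻¹)
      = 27 * (f x : ℂ) := by
    intro x
    calc ∑ ψ : AddChar (Additive Q) ℂ, F ψ * ψ (Additive.ofMul x⁻¹)
        = ∑ ψ : AddChar (Additive Q) ℂ, ∑ y : Q,
            (f y : ℂ) * ψ (Additive.ofMul y + Additive.ofMul x⁻¹) := by
          refine Finset.sum_congr rfl fun ψ _ => ?_
          rw [hFdef]
          rw [Finset.sum_mul]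
          refine Finset.sum_congr rfl fun y _ => ?_
          rw [AddChar.map_add_eq_mul]; ring
      _ = ∑ y : Q, (f y : ℂ) * ∑ ψ : AddChar (Additive Q) ℂ,
            ψ (Additive.ofMul y + Additive.ofMul x⁻¹) := by
          rw [Finset.sum_comm]
          exact Finset.sum_congr rfl fun y _ => (Finset.mul_sum _ _ _).symm
      _ = ∑ y : Q, (f y : ℂ) * (if y = x then (27 : ℂ) else 0) := by
          refine Finset.sum_congr rfl fun y _ => ?_
          congr 1
          rw [AddChar.sum_apply_eq_ite, hcardA]
          have hcond : (Additive.ofMul y + Additive.ofMul x⁻¹ = 0) ↔ y = x := by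
            have h' : Additive.ofMul y + Additive.ofMul x⁻¹
                = Additive.ofMul (y * x⁻¹) := rfl
            rw [h', show (0 : Additive Q) = Additive.ofMul 1 from rfl,
              Additive.ofMul.apply_eq_iff_eq]
            exact mul_inv_eq_one
          simp only [hcond]
          norm_num
      _ = 27 * (f x : ℂ) := by
          rw [Finset.sum_congr rfl (fun y (_ : y ∈ univ) =>
            (mul_ite (y = x) ((f y : ℂ)) (27 : ℂ) 0).trans rfl)]
          simp only [mul_zero]
          rw [Finset.sum_ite_eq' univ x (fun y => (f y : ℂ) * 27)]
          rw [if_pos (mem_univ x)]; ring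
  -- the key pointwise identity
  have hg : ∀ x : Q, 12 * ∑ ψ ∈ S, ψ (Additive.ofMul x⁻¹)
      = (if x = 1 then (189 : ℂ) else 0) + 36 - 27 * (f x : ℂ) := by
    intro x
    have expand : ∑ ψ : AddChar (Additive Q) ℂ, F ψ * ψ (Additive.ofMul x⁻¹)
        = 7 * ∑ ψ : AddChar (Additive Q) ℂ, ψ (Additive.ofMul x⁻¹)
          + ∑ ψ : AddChar (Additive Q) ℂ,
              (if ψ = 0 then (36 : ℂ) * ψ (Additive.ofMul x⁻¹) else 0)
          + ∑ ψ : AddChar (Additive Q) ℂ,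
              (if ψ ∈ S then (-12 : ℂ) * ψ (Additive.ofMul x⁻¹) else 0) := by
      rw [Finset.mul_sum, ← Finset.sum_add_distrib, ← Finset.sum_add_distrib]
      refine Finset.sum_congr rfl fun ψ _ => ?_
      rw [hFdecomp ψ]
      split <;> split <;> ring
    have e1 : ∑ ψ : AddChar (Additive Q) ℂ, ψ (Additive.ofMul x⁻¹)
        = (if x = 1 then (27 : ℂ) else 0) := by
      rw [AddChar.sum_apply_eq_ite, hcardA]
      have hcond : (Additive.ofMul x⁻¹ = 0) ↔ x = 1 := by
        rw [show (0 : Additive Q) = Additive.ofMul 1 from rfl,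
          Additive.ofMul.apply_eq_iff_eq]
        exact inv_eq_one
      simp only [hcond]
      norm_num
    have e2 : ∑ ψ : AddChar (Additive Q) ℂ,
        (if ψ = 0 then (36 : ℂ) * ψ (Additive.ofMul x⁻¹) else 0) = 36 := by
      rw [Finset.sum_ite_eq' univ (0 : AddChar (Additive Q) ℂ)
        (fun ψ => (36 : ℂ) * ψ (Additive.ofMul x⁻¹))]
      rw [if_pos (mem_univ _)]
      rw [AddChar.zero_apply, mul_one]
    have e3 : ∑ ψ : AddChar (Additive Q) ℂ,
        (if ψ ∈ S then (-12 : ℂ) * ψ (Additive.ofMul x⁻¹) else 0)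
        = -12 * ∑ ψ ∈ S, ψ (Additive.ofMul x⁻¹) := by
      rw [← Finset.sum_filter]
      have : univ.filter (fun ψ : AddChar (Additive Q) ℂ => ψ ∈ S) = S := by
        ext ψ; simp
      rw [this, Finset.mul_sum]
    have := hinv x
    rw [expand, e1, e2, e3] at this
    by_cases hx1 : x = 1
    · rw [if_pos hx1] at this ⊢
      linear_combination -this
    · rw [if_neg hx1] at this ⊢
      linear_combination -this
  -- integrality of character sums over S
  have hint : ∀ x : Q, ∃ m : ℤ,
      12 * m = (if x = 1 then (189 : ℤ) else 0) + 36 - 27 * (f x : ℤ)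
      ∧ -(s : ℤ) ≤ m ∧ m ≤ (s : ℤ) := by
    intro x
    set gx : ℂ := ∑ ψ ∈ S, ψ (Additive.ofMul x⁻¹) with hgx
    set z : ℤ := (if x = 1 then (189 : ℤ) else 0) + 36 - 27 * (f x : ℤ) with hz
    have h12 : 12 * gx = (z : ℂ) := by
      rw [hg x, hz]; push_cast; split <;> norm_num
    have hintgx : IsIntegral ℤ gx := by
      have : gx ∈ integralClosure ℤ ℂ := by
        rw [hgx]
        refine Subalgebra.sum_mem _ fun ψ _ => ?_
        have hroot : (ψ (Additive.ofMul x⁻¹)) ^ 27 = 1 := by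
          rw [← AddChar.map_nsmul_eq_pow, ← hcardA, card_nsmul_eq_zero,
            AddChar.map_zero_eq_one]
        refine ⟨Polynomial.X ^ 27 - Polynomial.C 1,
          Polynomial.monic_X_pow_sub_C 1 (by norm_num), ?_⟩
        simp only [Polynomial.eval₂_sub, Polynomial.eval₂_pow, Polynomial.eval₂_X,
          Polynomial.eval₂_one]
        rw [hroot]
        norm_num
      exact this
    have hgxval : gx = algebraMap ℚ ℂ ((z : ℚ) / 12) := by
      have hmap : algebraMap ℚ ℂ ((z : ℚ) / 12) = (z : ℂ) / 12 := by
        rw [eq_ratCast (algebraMap ℚ ℂ)]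
        push_cast
        ring
      rw [hmap, eq_div_iff (by norm_num : (12 : ℂ) ≠ 0)]
      linear_combination h12
    have hratint : IsIntegral ℤ ((z : ℚ) / 12) := by
      rw [hgxval] at hintgx
      exact (isIntegral_algebraMap_iff (algebraMap ℚ ℂ).injective).mp hintgx
    obtain ⟨m, hm⟩ := IsIntegrallyClosed.isIntegral_iff.mp hratint
    have hm' : (m : ℚ) = (z : ℚ) / 12 := by exact_mod_cast hm
    have hmz : 12 * m = z := by
      have : (12 : ℚ) * m = z := by rw [hm']; field_simp
      exact_mod_cast this
    refine ⟨m, hmz, ?_, ?_⟩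
    · -- norm bound
      have hnorm : ‖gx‖ ≤ (s : ℝ) := by
        rw [hgx]
        calc ‖∑ ψ ∈ S, ψ (Additive.ofMul x⁻¹)‖
            ≤ ∑ ψ ∈ S, ‖ψ (Additive.ofMul x⁻¹)‖ := norm_sum_le _ _
          _ = ∑ ψ ∈ S, 1 := by
              exact Finset.sum_congr rfl fun ψ _ => AddChar.norm_apply ψ _
          _ = (s : ℝ) := by rw [Finset.sum_const, hsdef]; simp
      have hmgx : (m : ℂ) = gx := by
        have h12' : (12 : ℂ) ≠ 0 := by norm_num
        have : (12 : ℂ) * m = 12 * gx := by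
          rw [h12]; exact_mod_cast congrArg (fun t : ℤ => (t : ℂ)) hmz
        exact mul_left_cancel₀ h12' this
      have : |(m : ℝ)| ≤ (s : ℝ) := by
        have := hmgx ▸ hnorm
        rwa [Complex.norm_intCast] at this
      have h1 := (abs_le.mp this).1
      exact_mod_cast h1
    · have hnorm : ‖gx‖ ≤ (s : ℝ) := by
        rw [hgx]
        calc ‖∑ ψ ∈ S, ψ (Additive.ofMul x⁻¹)‖
            ≤ ∑ ψ ∈ S, ‖ψ (Additive.ofMul x⁻¹)‖ := norm_sum_le _ _
          _ = ∑ ψ ∈ S, 1 := by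
              exact Finset.sum_congr rfl fun ψ _ => AddChar.norm_apply ψ _
          _ = (s : ℝ) := by rw [Finset.sum_const, hsdef]; simp
      have hmgx : (m : ℂ) = gx := by
        have h12' : (12 : ℂ) ≠ 0 := by norm_num
        have : (12 : ℂ) * m = 12 * gx := by
          rw [h12]; exact_mod_cast congrArg (fun t : ℤ => (t : ℂ)) hmz
        exact mul_left_cancel₀ h12' this
      have : |(m : ℝ)| ≤ (s : ℝ) := by
        have := hmgx ▸ hnorm
        rwa [Complex.norm_intCast] at this
      have h2 := (abs_le.mp this).2
      exact_mod_cast h2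
  -- value at 1 : the sum over S is exactly s
  have hat1 : 27 * (f 1 : ℤ) + 12 * (s : ℤ) = 225 := by
    have hsum1 : ∑ ψ ∈ S, ψ (Additive.ofMul (1 : Q)⁻¹) = (s : ℂ) := by
      have : ∀ ψ ∈ S, ψ (Additive.ofMul (1 : Q)⁻¹) = 1 := by
        intro ψ _
        have : Additive.ofMul (1 : Q)⁻¹ = 0 := by rw [inv_one]; rfl
        rw [this, AddChar.map_zero_eq_one]
      rw [Finset.sum_congr rfl this, Finset.sum_const, hsdef]; simp
    have := hg 1
    rw [hsum1, if_pos rfl] at this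
    have : 12 * (s : ℂ) = 225 - 27 * (f 1 : ℂ) := by linear_combination this
    have : 12 * (s : ℤ) = 225 - 27 * (f 1 : ℤ) := by exact_mod_cast this
    omega
  -- case analysis
  have hcases : (f 1 = 7 ∧ s = 3) ∨ (f 1 = 3 ∧ s = 12) := by omega
  rcases hcases with ⟨hc, hs3⟩ | ⟨hc, hs12⟩
  · -- s = 3 : all other values vanish
    have hzero : ∀ x : Q, x ≠ 1 → f x = 0 := by
      intro x hx
      obtain ⟨m, hmz, hml, hmr⟩ := hint x
      rw [if_neg hx] at hmz
      rw [hs3] at hml hmr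
      omega
    have : (43 : ℕ) = 7 := by
      rw [← hsum, Finset.sum_eq_single_of_mem (1 : Q) (mem_univ 1)
        (fun x _ hx => hzero x hx), hc]
    omega
  · -- s = 12 : values in {0, 4}
    have h04 : ∀ x : Q, x ≠ 1 → f x = 0 ∨ f x = 4 := by
      intro x hx
      obtain ⟨m, hmz, hml, hmr⟩ := hint x
      rw [if_neg hx] at hmz
      rw [hs12] at hml hmr
      omega
    have hsq : ∑ u : Q, f u * f u = 105 := by
      have := hconv 1
      simp only [inv_one, one_mul, if_pos rfl] at this
      rw [this, hc]
      norm_num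
    have e1 : ∑ x ∈ univ.erase 1, f x = 40 := by
      have := Finset.sum_erase_add univ f (mem_univ (1 : Q))
      omega
    have e2 : ∑ x ∈ univ.erase 1, f x * f x = 96 := by
      have := Finset.sum_erase_add univ (fun x => f x * f x) (mem_univ (1 : Q))
      rw [hsq] at this
      rw [hc] at this
      omega
    have e3 : ∑ x ∈ univ.erase 1, f x * f x = ∑ x ∈ univ.erase 1, 4 * f x := by
      refine Finset.sum_congr rfl fun x hx => ?_
      rcases h04 x (Finset.ne_of_mem_erase hx) with h | h <;> rw [h]
    rw [e3, ← Finset.mul_sum, e1] at e2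
    omega

end Auxiliary

theorem no_216_43_10_8_PDS (G : Type*) [CommGroup G] [Fintype G] [DecidableEq G]
    (hG : Fintype.card G = 216) :
    ¬ ∃ D : Finset G, IsPDS D 216 43 10 8 ∧ IsRegularPDS D ∧ ¬ IsTrivialPDS D := by
  rintro ⟨D, ⟨-, hD43, hreps⟩, ⟨h1D, hDinv⟩, -⟩
  classical
  haveI : Fact (Nat.Prime 2) := ⟨Nat.prime_two⟩
  obtain ⟨P⟩ : Nonempty (Sylow 2 G) := inferInstance
  have hfact : (Nat.card G).factorization 2 = 3 := by
    rw [Nat.card_eq_fintype_card, hG]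
    have h1 : (2 : ℕ) ^ 3 ∣ 216 := by norm_num
    have l1 := (Nat.Prime.pow_dvd_iff_le_factorization Nat.prime_two
      (by norm_num : (216 : ℕ) ≠ 0)).mp h1
    by_contra hne
    have h4 : 4 ≤ (216 : ℕ).factorization 2 := by omega
    have := (Nat.Prime.pow_dvd_iff_le_factorization Nat.prime_two
      (by norm_num : (216 : ℕ) ≠ 0)).mpr h4
    norm_num at this
  set N : Subgroup G := (P : Subgroup G) with hN
  have hP8 : Nat.card N = 8 := by
    rw [hN, Sylow.card_eq_multiplicity, hfact]
    norm_num
  set Q := G ⧸ N with hQdef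
  haveI : DecidableEq Q := Classical.decEq Q
  have hQ27 : Fintype.card Q = 27 := by
    have hh := Subgroup.card_eq_card_quotient_mul_card_subgroup N
    rw [← hQdef] at hh
    rw [hP8, Nat.card_eq_fintype_card, Nat.card_eq_fintype_card, hG] at hh
    omega
  set π : G →* Q := QuotientGroup.mk' N with hπ
  have hker : ∀ g : G, π g = 1 ↔ g ∈ N := fun g => QuotientGroup.eq_one_iff g
  -- fibers of π have 8 elements
  have hfib1 : (univ.filter (fun g : G => π g = (1 : Q))).card = 8 := by
    have he : univ.filter (fun g : G => π g = (1 : Q))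
        = univ.filter (fun g : G => g ∈ N) := by
      ext g
      simp only [Finset.mem_filter, Finset.mem_univ, true_and]
      exact hker g
    rw [he, ← Fintype.card_subtype, ← Nat.card_eq_fintype_card]
    exact hP8
  have hfib : ∀ y : Q, (univ.filter (fun g : G => π g = y)).card = 8 := by
    intro y
    obtain ⟨x0, rfl⟩ := QuotientGroup.mk'_surjective N y
    rw [← hfib1]
    apply Finset.card_bij' (fun (g : G) _ => x0⁻¹ * g) (fun (g : G) _ => x0 * g)
    · intro g hg
      rcases Finset.mem_filter.mp hg with ⟨-, hgy⟩
      refine Finset.mem_filter.mpr ⟨Finset.mem_univ _, ?_⟩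
      rw [map_mul, map_inv, hgy]
      exact inv_mul_cancel _
    · intro g hg
      rcases Finset.mem_filter.mp hg with ⟨-, hg1⟩
      refine Finset.mem_filter.mpr ⟨Finset.mem_univ _, ?_⟩
      rw [map_mul, hg1, mul_one]
    · intro g _; group
    · intro g _; group
  -- the fiber counting function
  set f : Q → ℕ := fun y => (D.filter (fun d => π d = y)).card with hfdef
  have hsum : ∑ y : Q, f y = 43 := by
    rw [hfdef, ← Finset.card_eq_sum_card_fiberwise (fun d _ => Finset.mem_univ (π d)),
      hD43]
  have hfle : ∀ y : Q, f y ≤ 8 := by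
    intro y
    rw [hfdef, ← hfib y]
    exact Finset.card_le_card (Finset.filter_subset_filter _ (Finset.subset_univ D))
  have hf1 : f 1 ≤ 7 := by
    have hsub : D.filter (fun d => π d = (1 : Q))
        ⊆ (univ.filter (fun g : G => π g = (1 : Q))).erase 1 := by
      intro d hd
      rcases Finset.mem_filter.mp hd with ⟨hdD, hdπ⟩
      refine Finset.mem_erase.mpr ⟨fun h => h1D (h ▸ hdD), ?_⟩
      exact Finset.mem_filter.mpr ⟨Finset.mem_univ _, hdπ⟩
    have h1mem : (1 : G) ∈ univ.filter (fun g : G => π g = (1 : Q)) :=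
      Finset.mem_filter.mpr ⟨Finset.mem_univ _, map_one π⟩
    have := Finset.card_le_card hsub
    rwa [Finset.card_erase_of_mem h1mem, hfib1] at this
  have hsym : ∀ y : Q, f y⁻¹ = f y := by
    intro y
    rw [hfdef]
    apply Finset.card_bij' (fun (d : G) _ => d⁻¹) (fun (d : G) _ => d⁻¹)
    · intro d hd
      rcases Finset.mem_filter.mp hd with ⟨hdD, hdπ⟩
      refine Finset.mem_filter.mpr ⟨(hDinv d).mp hdD, ?_⟩
      rw [map_inv, hdπ, inv_inv]
    · intro d hd
      rcases Finset.mem_filter.mp hd with ⟨hdD, hdπ⟩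
      refine Finset.mem_filter.mpr ⟨(hDinv d).mp hdD, ?_⟩
      rw [map_inv, hdπ]
    · intro d _; exact inv_inv d
    · intro d _; exact inv_inv d
  -- number of representations of the identity
  have hdiag : ((D ×ˢ D).filter (fun p : G × G => p.1 * p.2⁻¹ = 1)).card = 43 := by
    rw [← hD43]
    apply Finset.card_bij' (fun (p : G × G) _ => p.1) (fun (a : G) _ => (a, a))
    · intro p hp
      rcases Finset.mem_filter.mp hp with ⟨hp', -⟩
      exact (Finset.mem_product.mp hp').1
    · intro a ha
      refine Finset.mem_filter.mpr ⟨Finset.mem_product.mpr ⟨ha, ha⟩, ?_⟩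
      group
    · intro p hp
      rcases Finset.mem_filter.mp hp with ⟨-, hp2⟩
      have : p.1 = p.2 := mul_inv_eq_one.mp hp2
      exact Prod.ext rfl this
    · intro a _; rfl
  -- the convolution identity
  have hconv : ∀ y : Q, ∑ u : Q, f u * f (y⁻¹ * u)
      = 64 + 2 * f y + (if y = 1 then 35 else 0) := by
    intro y
    set T : Finset (G × G) := (D ×ˢ D).filter (fun p => π (p.1 * p.2⁻¹) = y) with hT
    -- first count : by the class of the first coordinate
    have hcount1 : T.card = ∑ u : Q, f u * f (y⁻¹ * u) := by
      rw [Finset.card_eq_sum_card_fiberwise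
        (fun (p : G × G) (_ : p ∈ T) => Finset.mem_univ (π p.1))]
      refine Finset.sum_congr rfl fun u _ => ?_
      have he : T.filter (fun p => π p.1 = u)
          = (D.filter (fun d => π d = u)) ×ˢ (D.filter (fun d => π d = y⁻¹ * u)) := by
        ext p
        simp only [hT, Finset.mem_filter, Finset.mem_product]
        constructor
        · rintro ⟨⟨⟨hp1, hp2⟩, hπy⟩, hu⟩
          refine ⟨⟨hp1, hu⟩, hp2, ?_⟩
          have hmul : π p.1 * (π p.2)⁻¹ = y := by
            rw [← map_inv, ← map_mul]; exact hπy
          rw [hu] at hmul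
          exact grp_aux.mp hmul
        · rintro ⟨⟨hp1, hu⟩, hp2, hp2'⟩
          refine ⟨⟨⟨hp1, hp2⟩, ?_⟩, hu⟩
          rw [map_mul, map_inv, hu, hp2']
          exact grp_aux.mpr rfl
      rw [he, Finset.card_product]
    -- second count : by the value of the difference
    have hcount2 : T.card = ∑ g ∈ univ.filter (fun g : G => π g = y),
        diffReps D g := by
      rw [Finset.card_eq_sum_card_fiberwise
        (f := fun p : G × G => p.1 * p.2⁻¹) (s := T)
        (t := univ.filter (fun g : G => π g = y))
        (fun (p : G × G) (hp : p ∈ T) => by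
          rcases Finset.mem_filter.mp hp with ⟨-, h⟩
          exact Finset.mem_filter.mpr ⟨Finset.mem_univ _, h⟩)]
      refine Finset.sum_congr rfl fun g hg => ?_
      rcases Finset.mem_filter.mp hg with ⟨-, hgy⟩
      unfold diffReps
      congr 1
      rw [hT, Finset.filter_filter]
      refine Finset.filter_congr fun p _ => ?_
      constructor
      · rintro ⟨-, h⟩; exact h
      · intro h; exact ⟨by rw [h]; exact hgy, h⟩
    -- evaluate the fiberwise sums of diffReps
    by_cases hy : y = 1
    · subst hy
      rw [if_pos rfl]
      have h1mem : (1 : G) ∈ univ.filter (fun g : G => π g = (1 : Q)) :=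
        Finset.mem_filter.mpr ⟨Finset.mem_univ _, map_one π⟩
      rw [← hcount1, hcount2, ← Finset.sum_erase_add _ _ h1mem]
      have hd1 : diffReps D (1 : G) = 43 := hdiag
      rw [hd1]
      set E := (univ.filter (fun g : G => π g = (1 : Q))).erase 1 with hE
      have hsplit := Finset.sum_filter_add_sum_filter_not E (fun g => g ∈ D)
        (fun g => diffReps D g)
      have hinD : ∑ g ∈ E.filter (fun g => g ∈ D), diffReps D g = 10 * f 1 := by
        have hcard : (E.filter (fun g => g ∈ D)).card = f 1 := by
          congr 1
          ext g
          simp only [hE, Finset.mem_filter, Finset.mem_erase, Finset.mem_univ, true_and,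
            hfdef]
          constructor
          · rintro ⟨⟨hne, hπ⟩, hD⟩; exact ⟨hD, hπ⟩
          · rintro ⟨hD, hπ⟩
            exact ⟨⟨fun h => h1D (h ▸ hD), hπ⟩, hD⟩
        have hval : ∀ g ∈ E.filter (fun g => g ∈ D), diffReps D g = 10 := by
          intro g hg
          rcases Finset.mem_filter.mp hg with ⟨hgE, hgD⟩
          rcases Finset.mem_erase.mp hgE with ⟨hne, -⟩
          exact (hreps g hne).1 hgD
        rw [Finset.sum_congr rfl hval, Finset.sum_const, hcard, smul_eq_mul, mul_comm]
      have hnotD : ∑ g ∈ E.filter (fun g => g ∉ D), diffReps D g = 8 * (7 - f 1) := by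
        have hcard : (E.filter (fun g => g ∉ D)).card = 7 - f 1 := by
          have htot : (E.filter (fun g => g ∈ D)).card
              + (E.filter (fun g => g ∉ D)).card = 7 := by
            rw [Finset.card_filter_add_card_filter_not]
            rw [hE, Finset.card_erase_of_mem h1mem, hfib1]
          have hcard1 : (E.filter (fun g => g ∈ D)).card = f 1 := by
            congr 1
            ext g
            simp only [hE, Finset.mem_filter, Finset.mem_erase, Finset.mem_univ, true_and,
              hfdef]
            constructor
            · rintro ⟨⟨hne, hπ⟩, hD⟩; exact ⟨hD, hπ⟩
            · rintro ⟨hD, hπ⟩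
              exact ⟨⟨fun h => h1D (h ▸ hD), hπ⟩, hD⟩
          omega
        have hval : ∀ g ∈ E.filter (fun g => g ∉ D), diffReps D g = 8 := by
          intro g hg
          rcases Finset.mem_filter.mp hg with ⟨hgE, hgD⟩
          rcases Finset.mem_erase.mp hgE with ⟨hne, -⟩
          exact (hreps g hne).2 hgD
        rw [Finset.sum_congr rfl hval, Finset.sum_const, hcard, smul_eq_mul, mul_comm]
      rw [← hsplit, hinD, hnotD]
      have := hf1
      omega
    · rw [if_neg hy]
      rw [← hcount1, hcount2]
      set E := univ.filter (fun g : G => π g = y) with hE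
      have hne1 : ∀ g ∈ E, g ≠ 1 := by
        intro g hg h1g
        rcases Finset.mem_filter.mp hg with ⟨-, hπ⟩
        rw [h1g, map_one] at hπ
        exact hy hπ.symm
      have hsplit := Finset.sum_filter_add_sum_filter_not E (fun g => g ∈ D)
        (fun g => diffReps D g)
      have hcard1 : (E.filter (fun g => g ∈ D)).card = f y := by
        congr 1
        ext g
        simp only [hE, Finset.mem_filter, Finset.mem_univ, true_and, hfdef]
        tauto
      have hinD : ∑ g ∈ E.filter (fun g => g ∈ D), diffReps D g = 10 * f y := by
        have hval : ∀ g ∈ E.filter (fun g => g ∈ D), diffReps D g = 10 := by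
          intro g hg
          rcases Finset.mem_filter.mp hg with ⟨hgE, hgD⟩
          exact (hreps g (hne1 g hgE)).1 hgD
        rw [Finset.sum_congr rfl hval, Finset.sum_const, hcard1, smul_eq_mul, mul_comm]
      have hnotD : ∑ g ∈ E.filter (fun g => g ∉ D), diffReps D g = 8 * (8 - f y) := by
        have hcard : (E.filter (fun g => g ∉ D)).card = 8 - f y := by
          have htot : (E.filter (fun g => g ∈ D)).card
              + (E.filter (fun g => g ∉ D)).card = 8 := by
            rw [Finset.card_filter_add_card_filter_not, hE, hfib y]
          omega
        have hval : ∀ g ∈ E.filter (fun g => g ∉ D), diffReps D g = 8 := by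
          intro g hg
          rcases Finset.mem_filter.mp hg with ⟨hgE, hgD⟩
          exact (hreps g (hne1 g hgE)).2 hgD
        rw [Finset.sum_congr rfl hval, Finset.sum_const, hcard, smul_eq_mul, mul_comm]
      rw [← hsplit, hinD, hnotD]
      have := hfle y
      omega
  exact key_quotient hQ27 f hsym hf1 hsum hconv
end

section
/- Let G be an abelian group of order 216 and let D be a regular (216,k,λ,μ)-PDS in G such that Δ = (λ−μ)² + 4(k−μ) is a perfect square. Then for every element g ∈ G of order 3, the number of d ∈ D with d⁴ = g equals the number of d ∈ D with d⁴ = g². -/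
/-- In a regular PDS `D` in an abelian group of order 216 with `Δ` a perfect square,
for every element `g` of order 3 the number of `d ∈ D` with `d⁴ = g` equals the
number of `d ∈ D` with `d⁴ = g²`. -/
theorem fourth_power_fibers_eq (G : Type*) [CommGroup G] [Fintype G] [DecidableEq G]
    (hG : Fintype.card G = 216) (D : Finset G) (k l m : ℕ)
    (hD : IsPDS D 216 k l m) (hreg : IsRegularPDS D)
    (hsq : IsSquare (((l : ℤ) - m) ^ 2 + 4 * ((k : ℤ) - m)))
    (g : G) (hg : orderOf g = 3) :
    (D.filter (fun d => d ^ 4 = g)).card = (D.filter (fun d => d ^ 4 = g ^ 2)).card := by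
  have hg3 : g ^ 3 = 1 := by rw [← hg]; exact pow_orderOf_eq_one g
  have hg2 : g ^ 2 = g⁻¹ := by
    have : g ^ 2 * g = 1 := by rw [← pow_succ]; exact hg3
    exact eq_inv_of_mul_eq_one_left this
  have hinv := hreg.2
  apply Finset.card_bij (fun d _ => d⁻¹)
  · intro a ha
    simp only [Finset.mem_filter] at ha ⊢
    refine ⟨(hinv a).1 ha.1, ?_⟩
    rw [hg2, ← ha.2, inv_pow]
  · intro a ha b hb h
    exact inv_injective h
  · intro b hb
    simp only [Finset.mem_filter] at hb ⊢
    refine ⟨b⁻¹, ⟨(hinv b).1 hb.1, ?_⟩, by simp⟩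
    rw [inv_pow, hb.2, hg2, inv_inv]
end

section
/- Let D be a regular (216, 40, 4, 8)-PDS in the group G = (ℤ/2ℤ)³ × (ℤ/3ℤ)³ containing no elements of order 2. For each element g ∈ G of order 3 let B_g denote the number of d ∈ D with d⁴ = g. Then the sum of B_g over all 26 elements g of order 3 equals 40, and the sum of B_g·(B_g − 1) over all such g equals 56. -/
/-- The group `(ℤ/2ℤ)³ × (ℤ/3ℤ)³`, written multiplicatively. -/
abbrev G216 : Type := Multiplicative ((Fin 3 → ZMod 2) × (Fin 3 → ZMod 3))

/- Auxiliary lemmas -/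

lemma g216_pow_six (g : G216) : g ^ 6 = 1 := by
  have h2 : ∀ x : ZMod 2, (6 : ℕ) • x = 0 := by decide
  have h3 : ∀ x : ZMod 3, (6 : ℕ) • x = 0 := by decide
  refine Multiplicative.toAdd.injective ?_
  rw [toAdd_pow]
  ext i
  · exact h2 _
  · exact h3 _

lemma g216_order_two_iff (g : G216) : orderOf g = 2 ↔ g ^ 2 = 1 ∧ g ≠ 1 := by
  constructor
  · intro h
    refine ⟨?_, ?_⟩
    · have := pow_orderOf_eq_one g; rwa [h] at this
    · intro hg; rw [hg, orderOf_one] at h; omega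
  · rintro ⟨hpow, hne⟩
    have hd : orderOf g ∣ 2 := orderOf_dvd_of_pow_eq_one hpow
    rcases (Nat.dvd_prime Nat.prime_two).mp hd with h1 | h2
    · exact absurd (orderOf_eq_one_iff.mp h1) hne
    · exact h2

lemma g216_card_order_two :
    (Finset.univ.filter fun g : G216 => orderOf g = 2).card = 7 := by
  have h : (Finset.univ.filter fun g : G216 => orderOf g = 2)
      = Finset.univ.filter fun g : G216 => g ^ 2 = 1 ∧ g ≠ 1 := by
    apply Finset.filter_congr
    intro g _
    simp [g216_order_two_iff]
  rw [h]
  decide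

lemma nat_mul_sub_one (n : ℕ) : n * (n - 1) = n * n - n := by
  cases n with
  | zero => rfl
  | succ k => rw [Nat.succ_sub_one, Nat.mul_succ, Nat.add_sub_cancel]

/-- For a regular `(216,40,4,8)`-PDS `D` in `(ℤ/2ℤ)³ × (ℤ/3ℤ)³` with no elements
of order 2, writing `B g = #{d ∈ D | d⁴ = g}` for each element `g` of order 3,
one has `∑ B g = 40` and `∑ B g (B g - 1) = 56`. -/
theorem fiber_count_equations_no_involutions (D : Finset G216)
    (hD : IsPDS D 216 40 4 8) (hreg : IsRegularPDS D)
    (h2 : ∀ d ∈ D, orderOf d ≠ 2) :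
    (∑ g ∈ Finset.univ.filter (fun g : G216 => orderOf g = 3),
        (D.filter (fun d => d ^ 4 = g)).card) = 40 ∧
    (∑ g ∈ Finset.univ.filter (fun g : G216 => orderOf g = 3),
        (D.filter (fun d => d ^ 4 = g)).card *
          ((D.filter (fun d => d ^ 4 = g)).card - 1)) = 56 := by
  obtain ⟨hcard, hk, hlm⟩ := hD
  obtain ⟨h1D, hinv⟩ := hreg
  set T : Finset G216 := Finset.univ.filter (fun g => orderOf g = 3) with hT
  -- every element of D has order 3 or 6
  have hord : ∀ d ∈ D, orderOf d = 3 ∨ orderOf d = 6 := by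
    intro d hd
    have h6 : orderOf d ∣ 6 := orderOf_dvd_of_pow_eq_one (g216_pow_six d)
    have hne1 : d ≠ 1 := fun h => h1D (h ▸ hd)
    have ho1 : orderOf d ≠ 1 := fun h => hne1 (orderOf_eq_one_iff.mp h)
    have ho2 := h2 d hd
    have hle : orderOf d ≤ 6 := Nat.le_of_dvd (by norm_num) h6
    set o := orderOf d with ho
    clear_value o
    interval_cases o <;> omega
  have hord4 : ∀ d ∈ D, orderOf (d ^ 4) = 3 := by
    intro d hd
    have hpow : (d ^ 4) ^ 3 = 1 := by
      have h6 := g216_pow_six d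
      calc (d ^ 4) ^ 3 = (d ^ 6) ^ 2 := by rw [← pow_mul, ← pow_mul]
        _ = 1 := by rw [h6, one_pow]
    have hne : d ^ 4 ≠ 1 := by
      intro h
      have hd4 : orderOf d ∣ 4 := orderOf_dvd_of_pow_eq_one h
      have hd6 : orderOf d ∣ 6 := orderOf_dvd_of_pow_eq_one (g216_pow_six d)
      have : orderOf d ∣ 2 := by
        have := Nat.dvd_gcd hd4 hd6
        simpa using this
      have h2' : orderOf d ≤ 2 := Nat.le_of_dvd (by norm_num) this
      rcases hord d hd with h' | h' <;> omega
    exact orderOf_eq_prime hpow hne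
  have hmemT : ∀ d ∈ D, d ^ 4 ∈ T :=
    fun d hd => Finset.mem_filter.mpr ⟨Finset.mem_univ _, hord4 d hd⟩
  -- part 1
  have part1 : (∑ g ∈ T, (D.filter fun d => d ^ 4 = g).card) = 40 := by
    rw [← Finset.card_eq_sum_card_fiberwise hmemT]
    exact hk
  refine ⟨part1, ?_⟩
  -- part 2
  set S : Finset (G216 × G216) :=
    (D ×ˢ D).filter (fun p => p.1 ^ 4 = p.2 ^ 4 ∧ p.1 ≠ p.2) with hS
  have hSmemT : ∀ p ∈ S, p.1 ^ 4 ∈ T := by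
    intro p hp
    obtain ⟨hp1, _⟩ := Finset.mem_filter.mp hp
    exact hmemT _ (Finset.mem_product.mp hp1).1
  have hfib1 : ∀ g ∈ T, (S.filter fun p => p.1 ^ 4 = g)
      = (D.filter fun d => d ^ 4 = g).offDiag := by
    intro g hg
    ext p
    simp only [hS, Finset.mem_offDiag, Finset.mem_filter, Finset.mem_product]
    constructor
    · rintro ⟨⟨⟨hd1, hd2⟩, heq, hne⟩, hg4⟩
      exact ⟨⟨hd1, hg4⟩, ⟨hd2, heq.symm.trans hg4⟩, hne⟩
    · rintro ⟨⟨hd1, hg1⟩, ⟨hd2, hg2⟩, hne⟩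
      exact ⟨⟨⟨hd1, hd2⟩, hg1.trans hg2.symm, hne⟩, hg1⟩
  have key2 : ∀ p ∈ S, orderOf (p.1 * p.2⁻¹) = 2 := by
    intro p hp
    obtain ⟨_, heq, hne⟩ := Finset.mem_filter.mp hp
    have h4 : (p.1 * p.2⁻¹) ^ 4 = 1 := by
      rw [mul_pow, inv_pow, heq, mul_inv_cancel]
    have h6 : (p.1 * p.2⁻¹) ^ 6 = 1 := g216_pow_six _
    have hdvd : orderOf (p.1 * p.2⁻¹) ∣ 2 := by
      have := Nat.dvd_gcd (orderOf_dvd_of_pow_eq_one h4)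
        (orderOf_dvd_of_pow_eq_one h6)
      simpa using this
    rw [g216_order_two_iff]
    refine ⟨orderOf_dvd_iff_pow_eq_one.mp hdvd, fun h => hne ?_⟩
    rwa [mul_inv_eq_one] at h
  set T2 : Finset G216 := Finset.univ.filter (fun g => orderOf g = 2) with hT2
  have hSmem2 : ∀ p ∈ S, p.1 * p.2⁻¹ ∈ T2 :=
    fun p hp => Finset.mem_filter.mpr ⟨Finset.mem_univ _, key2 p hp⟩
  have hfib2 : ∀ g ∈ T2, (S.filter fun p => p.1 * p.2⁻¹ = g)
      = (D ×ˢ D).filter (fun p => p.1 * p.2⁻¹ = g) := by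
    intro g hg
    have hg2 : orderOf g = 2 := (Finset.mem_filter.mp hg).2
    have hsq : g ^ 2 = 1 := by
      have := pow_orderOf_eq_one g; rwa [hg2] at this
    ext p
    simp only [hS, Finset.mem_filter, Finset.mem_product]
    constructor
    · rintro ⟨⟨hmem, _⟩, hgp⟩
      exact ⟨hmem, hgp⟩
    · rintro ⟨hmem, hgp⟩
      refine ⟨⟨hmem, ?_, fun h => ?_⟩, hgp⟩
      · have hgpow : g ^ 4 = 1 := by
          rw [show (4 : ℕ) = 2 * 2 from rfl, pow_mul, hsq, one_pow]
        have hp1 : p.1 = g * p.2 := by rw [← hgp, inv_mul_cancel_right]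
        rw [hp1, mul_pow, hgpow, one_mul]
      · rw [h, mul_inv_cancel] at hgp
        rw [← hgp, orderOf_one] at hg2
        omega
  -- the count of ordered distinct pairs with equal fourth powers is 56
  have hScard : S.card = 56 := by
    rw [Finset.card_eq_sum_card_fiberwise hSmem2]
    have hterm : ∀ g ∈ T2, (S.filter fun p => p.1 * p.2⁻¹ = g).card = 8 := by
      intro g hg
      have hg2 : orderOf g = 2 := (Finset.mem_filter.mp hg).2
      have hgne : g ≠ 1 := by
        intro h; rw [h, orderOf_one] at hg2; omega
      have hgD : g ∉ D := fun h => h2 g h hg2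
      rw [hfib2 g hg]
      exact (hlm g hgne).2 hgD
    rw [Finset.sum_congr rfl hterm, Finset.sum_const]
    rw [hT2] at *
    rw [g216_card_order_two]
    norm_num
  calc (∑ g ∈ T, (D.filter fun d => d ^ 4 = g).card *
          ((D.filter fun d => d ^ 4 = g).card - 1))
      = ∑ g ∈ T, ((D.filter fun d => d ^ 4 = g).offDiag).card := by
        refine Finset.sum_congr rfl fun g _ => ?_
        rw [Finset.offDiag_card, nat_mul_sub_one]
    _ = ∑ g ∈ T, (S.filter fun p => p.1 ^ 4 = g).card :=
        Finset.sum_congr rfl fun g hg => by rw [hfib1 g hg]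
    _ = S.card := (Finset.card_eq_sum_card_fiberwise hSmemT).symm
    _ = 56 := hScard
end

section
/- Let (C₁, C₂, …, C₁₃) be a weakly decreasing 13-tuple of nonnegative integers satisfying C₁ + C₂ + ⋯ + C₁₃ = 18 and C₁² + C₂² + ⋯ + C₁₃² = 32. Then (C₁, …, C₁₃) is one of the following three tuples: (3,3,2,1,1,1,1,1,1,1,1,1,1), (3,2,2,2,2,1,1,1,1,1,1,1,0), (2,2,2,2,2,2,2,1,1,1,1,0,0); and conversely each of these three tuples satisfies both equations. -/
private lemma sum13 (f : Fin 13 → ℕ) :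
    (∑ i, f i) = f 0 + (f 1 + (f 2 + (f 3 + (f 4 + (f 5 + (f 6 + (f 7 +
      (f 8 + (f 9 + (f 10 + (f 11 + f 12))))))))))) := by
  simp [Fin.sum_univ_succ]

private lemma eqvec13 (C v : Fin 13 → ℕ)
    (h0 : C 0 = v 0) (h1 : C 1 = v 1) (h2 : C 2 = v 2) (h3 : C 3 = v 3)
    (h4 : C 4 = v 4) (h5 : C 5 = v 5) (h6 : C 6 = v 6) (h7 : C 7 = v 7)
    (h8 : C 8 = v 8) (h9 : C 9 = v 9) (h10 : C 10 = v 10) (h11 : C 11 = v 11)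
    (h12 : C 12 = v 12) : C = v := by
  funext i
  fin_cases i <;> assumption

set_option maxHeartbeats 4000000 in
/-- The weakly decreasing 13-tuples of nonnegative integers with sum 18 and sum of
squares 32 are exactly the three listed tuples. -/
theorem tuples_sum18_sumsq32 :
    (∀ C : Fin 13 → ℕ, Antitone C → (∑ i, C i) = 18 → (∑ i, (C i) ^ 2) = 32 →
      C = ![3,3,2,1,1,1,1,1,1,1,1,1,1] ∨
      C = ![3,2,2,2,2,1,1,1,1,1,1,1,0] ∨
      C = ![2,2,2,2,2,2,2,1,1,1,1,0,0]) ∧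
    (∀ C : Fin 13 → ℕ,
      (C = ![3,3,2,1,1,1,1,1,1,1,1,1,1] ∨
       C = ![3,2,2,2,2,1,1,1,1,1,1,1,0] ∨
       C = ![2,2,2,2,2,2,2,1,1,1,1,0,0]) →
      (∑ i, C i) = 18 ∧ (∑ i, (C i) ^ 2) = 32) := by
  constructor
  · intro C hC h1 h2
    have h1' : C 0 + (C 1 + (C 2 + (C 3 + (C 4 + (C 5 + (C 6 + (C 7 +
        (C 8 + (C 9 + (C 10 + (C 11 + C 12))))))))))) = 18 :=
      (sum13 C).symm.trans h1
    have h2' : C 0 ^ 2 + (C 1 ^ 2 + (C 2 ^ 2 + (C 3 ^ 2 + (C 4 ^ 2 + (C 5 ^ 2 +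
        (C 6 ^ 2 + (C 7 ^ 2 + (C 8 ^ 2 + (C 9 ^ 2 + (C 10 ^ 2 + (C 11 ^ 2 +
        C 12 ^ 2))))))))))) = 32 :=
      (sum13 (fun i => C i ^ 2)).symm.trans h2
    clear h1 h2
    have hsq0 : C 0 ^ 2 ≤ 32 := by omega
    have hb : C 0 ≤ 5 := by
      by_contra hcon
      have h36 : 6 ^ 2 ≤ C 0 ^ 2 := Nat.pow_le_pow_left (by omega) 2
      omega
    have e0 : C 1 ≤ C 0 := hC (by decide)
    have e1 : C 2 ≤ C 1 := hC (by decide)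
    have e2 : C 3 ≤ C 2 := hC (by decide)
    have e3 : C 4 ≤ C 3 := hC (by decide)
    have e4 : C 5 ≤ C 4 := hC (by decide)
    have e5 : C 6 ≤ C 5 := hC (by decide)
    have e6 : C 7 ≤ C 6 := hC (by decide)
    have e7 : C 8 ≤ C 7 := hC (by decide)
    have e8 : C 9 ≤ C 8 := hC (by decide)
    have e9 : C 10 ≤ C 9 := hC (by decide)
    have e10 : C 11 ≤ C 10 := hC (by decide)
    have e11 : C 12 ≤ C 11 := hC (by decide)
    have q : ∀ i : Fin 13, C i ≤ C i ^ 2 := fun i => Nat.le_self_pow (by norm_num) _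
    have q0 := q 0; have q1 := q 1; have q2 := q 2; have q3 := q 3
    have q4 := q 4; have q5 := q 5; have q6 := q 6; have q7 := q 7
    have q8 := q 8; have q9 := q 9; have q10 := q 10; have q11 := q 11
    have q12 := q 12
    have rr : ∀ a : ℕ, 2 * a ≤ a ^ 2 + 1 := fun a => by
      cases a with
      | zero => norm_num
      | succ n =>
        calc 2 * (n + 1) = 2 * n + 2 := by ring
          _ ≤ n ^ 2 + (2 * n + 2) := by omega
          _ = (n + 1) ^ 2 + 1 := by ring
    have r0 := rr (C 0); have r1 := rr (C 1); have r2 := rr (C 2)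
    have r3 := rr (C 3); have r4 := rr (C 4); have r5 := rr (C 5)
    have r6 := rr (C 6); have r7 := rr (C 7); have r8 := rr (C 8)
    have r9 := rr (C 9); have r10 := rr (C 10); have r11 := rr (C 11)
    have r12 := rr (C 12)
    have u : ∀ i : Fin 13, C i ^ 2 ≤ 5 * C i := fun i => by
      have h4 : C i ≤ 5 := le_trans (hC (Fin.zero_le i)) hb
      calc C i ^ 2 = C i * C i := by ring
        _ ≤ 5 * C i := Nat.mul_le_mul_right _ h4
    have u0 := u 0; have u1 := u 1; have u2 := u 2; have u3 := u 3
    have u4 := u 4; have u5 := u 5; have u6 := u 6; have u7 := u 7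
    have u8 := u 8; have u9 := u 9; have u10 := u 10; have u11 := u 11
    have u12 := u 12
    clear q u rr
    suffices hd :
      (C 0 = 3 ∧ C 1 = 3 ∧ C 2 = 2 ∧ C 3 = 1 ∧ C 4 = 1 ∧ C 5 = 1 ∧ C 6 = 1 ∧
        C 7 = 1 ∧ C 8 = 1 ∧ C 9 = 1 ∧ C 10 = 1 ∧ C 11 = 1 ∧ C 12 = 1) ∨
      (C 0 = 3 ∧ C 1 = 2 ∧ C 2 = 2 ∧ C 3 = 2 ∧ C 4 = 2 ∧ C 5 = 1 ∧ C 6 = 1 ∧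
        C 7 = 1 ∧ C 8 = 1 ∧ C 9 = 1 ∧ C 10 = 1 ∧ C 11 = 1 ∧ C 12 = 0) ∨
      (C 0 = 2 ∧ C 1 = 2 ∧ C 2 = 2 ∧ C 3 = 2 ∧ C 4 = 2 ∧ C 5 = 2 ∧ C 6 = 2 ∧
        C 7 = 1 ∧ C 8 = 1 ∧ C 9 = 1 ∧ C 10 = 1 ∧ C 11 = 0 ∧ C 12 = 0) by
      rcases hd with ⟨a,b,c,d,e,f,g,h,i,j,k,l,m⟩ | ⟨a,b,c,d,e,f,g,h,i,j,k,l,m⟩ |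
        ⟨a,b,c,d,e,f,g,h,i,j,k,l,m⟩
      · exact Or.inl (eqvec13 C _ a b c d e f g h i j k l m)
      · exact Or.inr (Or.inl (eqvec13 C _ a b c d e f g h i j k l m))
      · exact Or.inr (Or.inr (eqvec13 C _ a b c d e f g h i j k l m))
    set a0 := C 0 with ha0
    set a1 := C 1 with ha1
    set a2 := C 2 with ha2
    set a3 := C 3 with ha3
    set a4 := C 4 with ha4
    set a5 := C 5 with ha5
    set a6 := C 6 with ha6
    set a7 := C 7 with ha7
    set a8 := C 8 with ha8
    set a9 := C 9 with ha9
    set a10 := C 10 with ha10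
    set a11 := C 11 with ha11
    set a12 := C 12 with ha12
    interval_cases a0
    all_goals try (exfalso; linarith only [h1', h2', e0, e1, e2, e3, e4, e5, e6, e7, e8, e9, e10, e11, q0, q1, q2, q3, q4, q5, q6, q7, q8, q9, q10, q11, q12, r0, r1, r2, r3, r4, r5, r6, r7, r8, r9, r10, r11, r12, u0, u1, u2, u3, u4, u5, u6, u7, u8, u9, u10, u11, u12])
    all_goals interval_cases a1
    all_goals try (exfalso; linarith only [h1', h2', e0, e1, e2, e3, e4, e5, e6, e7, e8, e9, e10, e11, q0, q1, q2, q3, q4, q5, q6, q7, q8, q9, q10, q11, q12, r0, r1, r2, r3, r4, r5, r6, r7, r8, r9, r10, r11, r12, u0, u1, u2, u3, u4, u5, u6, u7, u8, u9, u10, u11, u12])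
    all_goals interval_cases a2
    all_goals try (exfalso; linarith only [h1', h2', e0, e1, e2, e3, e4, e5, e6, e7, e8, e9, e10, e11, q0, q1, q2, q3, q4, q5, q6, q7, q8, q9, q10, q11, q12, r0, r1, r2, r3, r4, r5, r6, r7, r8, r9, r10, r11, r12, u0, u1, u2, u3, u4, u5, u6, u7, u8, u9, u10, u11, u12])
    all_goals interval_cases a3
    all_goals try (exfalso; linarith only [h1', h2', e0, e1, e2, e3, e4, e5, e6, e7, e8, e9, e10, e11, q0, q1, q2, q3, q4, q5, q6, q7, q8, q9, q10, q11, q12, r0, r1, r2, r3, r4, r5, r6, r7, r8, r9, r10, r11, r12, u0, u1, u2, u3, u4, u5, u6, u7, u8, u9, u10, u11, u12])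
    all_goals interval_cases a4
    all_goals try (exfalso; linarith only [h1', h2', e0, e1, e2, e3, e4, e5, e6, e7, e8, e9, e10, e11, q0, q1, q2, q3, q4, q5, q6, q7, q8, q9, q10, q11, q12, r0, r1, r2, r3, r4, r5, r6, r7, r8, r9, r10, r11, r12, u0, u1, u2, u3, u4, u5, u6, u7, u8, u9, u10, u11, u12])
    all_goals interval_cases a5
    all_goals try (exfalso; linarith only [h1', h2', e0, e1, e2, e3, e4, e5, e6, e7, e8, e9, e10, e11, q0, q1, q2, q3, q4, q5, q6, q7, q8, q9, q10, q11, q12, r0, r1, r2, r3, r4, r5, r6, r7, r8, r9, r10, r11, r12, u0, u1, u2, u3, u4, u5, u6, u7, u8, u9, u10, u11, u12])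
    all_goals interval_cases a6
    all_goals try (exfalso; linarith only [h1', h2', e0, e1, e2, e3, e4, e5, e6, e7, e8, e9, e10, e11, q0, q1, q2, q3, q4, q5, q6, q7, q8, q9, q10, q11, q12, r0, r1, r2, r3, r4, r5, r6, r7, r8, r9, r10, r11, r12, u0, u1, u2, u3, u4, u5, u6, u7, u8, u9, u10, u11, u12])
    all_goals interval_cases a7
    all_goals try (exfalso; linarith only [h1', h2', e0, e1, e2, e3, e4, e5, e6, e7, e8, e9, e10, e11, q0, q1, q2, q3, q4, q5, q6, q7, q8, q9, q10, q11, q12, r0, r1, r2, r3, r4, r5, r6, r7, r8, r9, r10, r11, r12, u0, u1, u2, u3, u4, u5, u6, u7, u8, u9, u10, u11, u12])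
    all_goals interval_cases a8
    all_goals try (exfalso; linarith only [h1', h2', e0, e1, e2, e3, e4, e5, e6, e7, e8, e9, e10, e11, q0, q1, q2, q3, q4, q5, q6, q7, q8, q9, q10, q11, q12, r0, r1, r2, r3, r4, r5, r6, r7, r8, r9, r10, r11, r12, u0, u1, u2, u3, u4, u5, u6, u7, u8, u9, u10, u11, u12])
    all_goals interval_cases a9
    all_goals try (exfalso; linarith only [h1', h2', e0, e1, e2, e3, e4, e5, e6, e7, e8, e9, e10, e11, q0, q1, q2, q3, q4, q5, q6, q7, q8, q9, q10, q11, q12, r0, r1, r2, r3, r4, r5, r6, r7, r8, r9, r10, r11, r12, u0, u1, u2, u3, u4, u5, u6, u7, u8, u9, u10, u11, u12])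
    all_goals interval_cases a10
    all_goals try (exfalso; linarith only [h1', h2', e0, e1, e2, e3, e4, e5, e6, e7, e8, e9, e10, e11, q0, q1, q2, q3, q4, q5, q6, q7, q8, q9, q10, q11, q12, r0, r1, r2, r3, r4, r5, r6, r7, r8, r9, r10, r11, r12, u0, u1, u2, u3, u4, u5, u6, u7, u8, u9, u10, u11, u12])
    all_goals interval_cases a11
    all_goals try (exfalso; linarith only [h1', h2', e0, e1, e2, e3, e4, e5, e6, e7, e8, e9, e10, e11, q0, q1, q2, q3, q4, q5, q6, q7, q8, q9, q10, q11, q12, r0, r1, r2, r3, r4, r5, r6, r7, r8, r9, r10, r11, r12, u0, u1, u2, u3, u4, u5, u6, u7, u8, u9, u10, u11, u12])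
    all_goals interval_cases a12
    all_goals omega
  · intro C h
    rcases h with h | h | h <;> subst h <;> exact ⟨by decide, by decide⟩
end

section
/- Let w be an integer-valued function on the set of 1-dimensional subspaces of F₃³. Suppose that for every 2-dimensional subspace W of F₃³, the sum of w(P) over all 1-dimensional subspaces P contained in W is even. Then for every 1-dimensional subspace P₀ of F₃³, the total sum of w(P) over all 13 one-dimensional subspaces P is congruent to w(P₀) modulo 2. In particular, if the total sum is even, then w(P) is even for every 1-dimensional subspace P. -/
open Module Submodule Finset

set_option maxHeartbeats 800000

namespace EvenLineAux

open Classical in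
noncomputable instance : Fintype (Submodule (ZMod 3) (Fin 3 → ZMod 3)) :=
  Fintype.ofFinite _

local notation "K" => ZMod 3
local notation "V" => (Fin 3 → ZMod 3)

open Classical

/-- points inside `W` -/
noncomputable def pts (W : Submodule K V) : Finset (Submodule K V) :=
  Finset.univ.filter (fun P => finrank K P = 1 ∧ P ≤ W)

lemma mem_pts {W P : Submodule K V} : P ∈ pts W ↔ finrank K P = 1 ∧ P ≤ W := by
  simp [pts]

lemma span_eq_of_mem {P : Submodule K V} (hP : finrank K P = 1) {x : V}
    (hx : x ∈ P) (hx0 : x ≠ 0) : span K {x} = P := by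
  apply eq_of_le_of_finrank_le
  · rwa [span_le, Set.singleton_subset_iff]
  · rw [hP, finrank_span_singleton hx0]

/-- nonzero elements of a submodule -/
noncomputable def nz (P : Submodule K V) : Finset V := (P : Set V).toFinset.erase 0

lemma card_nz {P : Submodule K V} : (nz P).card = 3 ^ finrank K P - 1 := by
  rw [nz, Finset.card_erase_of_mem (by simp [Set.mem_toFinset]), Set.toFinset_card]
  congr 1
  have : Fintype.card P = Fintype.card K ^ finrank K P := card_eq_pow_finrank
  simpa [ZMod.card] using this.symm ▸ rfl

lemma card_pts (W : Submodule K V) : 2 * (pts W).card = 3 ^ finrank K W - 1 := by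
  have hdisj : ∀ P ∈ pts W, ∀ Q ∈ pts W, P ≠ Q → Disjoint (nz P) (nz Q) := by
    intro P hP Q hQ hne
    rw [Finset.disjoint_left]
    intro x hxP hxQ
    simp only [nz, Finset.mem_erase, Set.mem_toFinset, SetLike.mem_coe] at hxP hxQ
    exact hne ((span_eq_of_mem (mem_pts.1 hP).1 hxP.2 hxP.1).symm.trans
      (span_eq_of_mem (mem_pts.1 hQ).1 hxQ.2 hxQ.1))
  have hcover : (pts W).biUnion nz = nz W := by
    ext x
    simp only [Finset.mem_biUnion, nz, Finset.mem_erase, Set.mem_toFinset, SetLike.mem_coe]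
    constructor
    · rintro ⟨P, hP, hx0, hxP⟩
      exact ⟨hx0, (mem_pts.1 hP).2 hxP⟩
    · rintro ⟨hx0, hxW⟩
      refine ⟨span K {x}, mem_pts.2 ⟨finrank_span_singleton hx0, ?_⟩, hx0,
        mem_span_singleton_self x⟩
      rwa [span_le, Set.singleton_subset_iff]
  have := Finset.card_biUnion hdisj
  rw [hcover, card_nz] at this
  have h2 : ∀ P ∈ pts W, (nz P).card = 2 := by
    intro P hP
    rw [card_nz, (mem_pts.1 hP).1]; norm_num
  rw [Finset.sum_congr rfl h2, Finset.sum_const, smul_eq_mul] at this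
  omega


lemma finrank_sup {P Q : Submodule K V} (hP : finrank K P = 1) (hQ : finrank K Q = 1)
    (hne : P ≠ Q) : finrank K (P ⊔ Q : Submodule K V) = 2 := by
  have hbot : P ⊓ Q = ⊥ := by
    rw [eq_bot_iff]
    intro x hx
    rw [Submodule.mem_bot]
    by_contra hx0
    exact hne ((span_eq_of_mem hP hx.1 hx0).symm.trans (span_eq_of_mem hQ hx.2 hx0))
  have h := Submodule.finrank_sup_add_finrank_inf_eq P Q
  rw [hbot, hP, hQ, finrank_bot] at h
  omega

lemma line_unique {P Q W : Submodule K V} (hP : finrank K P = 1) (hQ : finrank K Q = 1)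
    (hne : P ≠ Q) (hW : finrank K W = 2) (hPW : P ≤ W) (hQW : Q ≤ W) : W = P ⊔ Q := by
  refine (eq_of_le_of_finrank_le (sup_le hPW hQW) ?_).symm
  rw [hW, finrank_sup hP hQ hne]

/-- lines through `P₀` -/
noncomputable def lns (P₀ : Submodule K V) : Finset (Submodule K V) :=
  Finset.univ.filter (fun W => finrank K W = 2 ∧ P₀ ≤ W)

lemma mem_lns {P₀ W : Submodule K V} : W ∈ lns P₀ ↔ finrank K W = 2 ∧ P₀ ≤ W := by
  simp [lns]

lemma card_pts_line {W : Submodule K V} (hW : finrank K W = 2) : (pts W).card = 4 := by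
  have := card_pts W
  rw [hW] at this; omega

lemma card_pts_top : (pts ⊤).card = 13 := by
  have := card_pts (⊤ : Submodule K V)
  rw [finrank_top, Module.finrank_fin_fun] at this; omega

lemma lns_disj {P₀ : Submodule K V} (hP₀ : finrank K P₀ = 1) :
    ∀ W ∈ lns P₀, ∀ W' ∈ lns P₀, W ≠ W' →
      Disjoint ((pts W).erase P₀) ((pts W').erase P₀) := by
    intro W hW W' hW' hne
    rw [Finset.disjoint_left]
    intro P hPW hPW'
    obtain ⟨hPne, hPW⟩ := Finset.mem_erase.1 hPW
    obtain ⟨_, hPW'⟩ := Finset.mem_erase.1 hPW'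
    obtain ⟨hW2, hP₀W⟩ := mem_lns.1 hW
    obtain ⟨hW'2, hP₀W'⟩ := mem_lns.1 hW'
    exact hne ((line_unique hP₀ (mem_pts.1 hPW).1 (Ne.symm hPne) hW2 hP₀W
        (mem_pts.1 hPW).2).trans
      (line_unique hP₀ (mem_pts.1 hPW').1 (Ne.symm hPne) hW'2 hP₀W'
        (mem_pts.1 hPW').2).symm)

lemma lns_cover {P₀ : Submodule K V} (hP₀ : finrank K P₀ = 1) :
    (lns P₀).biUnion (fun W => (pts W).erase P₀) = (pts ⊤).erase P₀ := by
    ext P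
    simp only [Finset.mem_biUnion, Finset.mem_erase]
    constructor
    · rintro ⟨W, hW, hPne, hPW⟩
      exact ⟨hPne, mem_pts.2 ⟨(mem_pts.1 hPW).1, le_top⟩⟩
    · rintro ⟨hPne, hP⟩
      have hP1 := (mem_pts.1 hP).1
      refine ⟨P₀ ⊔ P, mem_lns.2 ⟨finrank_sup hP₀ hP1 (Ne.symm hPne), le_sup_left⟩,
        hPne, mem_pts.2 ⟨hP1, le_sup_right⟩⟩

lemma card_lns {P₀ : Submodule K V} (hP₀ : finrank K P₀ = 1) : (lns P₀).card = 4 := by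
  have hkey := Finset.card_biUnion (lns_disj hP₀)
  rw [lns_cover hP₀] at hkey
  have h3 : ∀ W ∈ lns P₀, ((pts W).erase P₀).card = 3 := by
    intro W hW
    obtain ⟨hW2, hP₀W⟩ := mem_lns.1 hW
    rw [Finset.card_erase_of_mem (mem_pts.2 ⟨hP₀, hP₀W⟩), card_pts_line hW2]
  rw [Finset.sum_congr rfl h3, Finset.sum_const, smul_eq_mul,
    Finset.card_erase_of_mem (mem_pts.2 ⟨hP₀, le_top⟩), card_pts_top] at hkey
  omega


lemma set_pts_eq (W : Submodule K V) :
    {P : Submodule K V | finrank K P = 1 ∧ P ≤ W} = ↑(pts W) := by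
  ext P; simp [mem_pts]

lemma set_pts_top_eq :
    {P : Submodule K V | finrank K P = 1} = ↑(pts (⊤ : Submodule K V)) := by
  ext P; simp [mem_pts]

lemma main_congr (w : Submodule K V → ℤ)
    (hline : ∀ W : Submodule K V, finrank K W = 2 →
      Even (∑ P ∈ pts W, w P))
    {P₀ : Submodule K V} (hP₀ : finrank K P₀ = 1) :
    (∑ P ∈ pts (⊤ : Submodule K V), w P) ≡ w P₀ [ZMOD 2] := by
  set S := ∑ P ∈ pts (⊤ : Submodule K V), w P with hS
  have hT : ∑ W ∈ lns P₀, ∑ P ∈ pts W, w P = 4 * w P₀ + (S - w P₀) := by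
    have hsplit : ∀ W ∈ lns P₀, ∑ P ∈ pts W, w P
        = w P₀ + ∑ P ∈ (pts W).erase P₀, w P := by
      intro W hW
      exact (Finset.add_sum_erase _ w (mem_pts.2 ⟨hP₀, (mem_lns.1 hW).2⟩)).symm
    rw [Finset.sum_congr rfl hsplit, Finset.sum_add_distrib, Finset.sum_const,
      card_lns hP₀, ← Finset.sum_biUnion (lns_disj hP₀), lns_cover hP₀]
    have := Finset.add_sum_erase _ w (mem_pts.2 ⟨hP₀, le_top (a := P₀)⟩)
    rw [← hS] at this
    simp only [nsmul_eq_mul, Nat.cast_ofNat]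
    linarith [this]
  have hTe : Even (∑ W ∈ lns P₀, ∑ P ∈ pts W, w P) := by
    rw [even_iff_two_dvd]
    exact Finset.dvd_sum fun W hW =>
      (even_iff_two_dvd).1 (hline W (mem_lns.1 hW).1)
  obtain ⟨k, hk⟩ := hTe
  rw [hT] at hk
  rw [Int.ModEq]
  omega

end EvenLineAux

open EvenLineAux in

/-- If an integer weight function on the points of the projective plane of order 3
(the 1-dimensional subspaces of `F₃³`) has even sum on every line (2-dimensional
subspace), then the total weight is congruent to each individual weight mod 2; in
particular, if the total weight is even then every weight is even. -/
theorem even_line_weights (w : Submodule (ZMod 3) (Fin 3 → ZMod 3) → ℤ)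
    (hline : ∀ W : Submodule (ZMod 3) (Fin 3 → ZMod 3), finrank (ZMod 3) W = 2 →
      Even (∑ᶠ P ∈ {P : Submodule (ZMod 3) (Fin 3 → ZMod 3) |
        finrank (ZMod 3) P = 1 ∧ P ≤ W}, w P)) :
    (∀ P₀ : Submodule (ZMod 3) (Fin 3 → ZMod 3), finrank (ZMod 3) P₀ = 1 →
      (∑ᶠ P ∈ {P : Submodule (ZMod 3) (Fin 3 → ZMod 3) | finrank (ZMod 3) P = 1}, w P)
        ≡ w P₀ [ZMOD 2]) ∧
    (Even (∑ᶠ P ∈ {P : Submodule (ZMod 3) (Fin 3 → ZMod 3) |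
        finrank (ZMod 3) P = 1}, w P) →
      ∀ P : Submodule (ZMod 3) (Fin 3 → ZMod 3), finrank (ZMod 3) P = 1 →
        Even (w P)) := by
  have hline' : ∀ W : Submodule (ZMod 3) (Fin 3 → ZMod 3), finrank (ZMod 3) W = 2 →
      Even (∑ P ∈ pts W, w P) := by
    intro W hW
    have := hline W hW
    rwa [set_pts_eq, finsum_mem_coe_finset] at this
  have hrw : (∑ᶠ P ∈ {P : Submodule (ZMod 3) (Fin 3 → ZMod 3) | finrank (ZMod 3) P = 1}, w P)
      = ∑ P ∈ pts (⊤ : Submodule (ZMod 3) (Fin 3 → ZMod 3)), w P := by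
    rw [set_pts_top_eq, finsum_mem_coe_finset]
  rw [hrw]
  constructor
  · intro P₀ hP₀
    exact main_congr w hline' hP₀
  · intro hEven P hP
    have hc := main_congr w hline' hP
    obtain ⟨k, hk⟩ := hEven
    rw [Int.ModEq] at hc
    rw [Int.even_iff]
    omega
end

section
/- There is no function w from the set of 1-dimensional subspaces of F₃³ to the nonnegative integers such that: (i) the multiset of the 13 values of w is {4, 2, 2, 2, 2, 2, 2, 2, 2, 0, 0, 0, 0} (i.e., w takes the value 4 exactly once, the value 2 exactly eight times, and the value 0 exactly four times); and (ii) for every 2-dimensional subspace W of F₃³, the sum of w(P) over all 1-dimensional subspaces P contained in W equals 4 or 8. -/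
open Module Submodule Set

namespace NoWeighting

abbrev K := ZMod 3
abbrev V := Fin 3 → K

def r : Fin 13 → V :=
  ![![1,0,0], ![0,1,0], ![0,0,1], ![1,1,0], ![1,2,0], ![1,0,1], ![1,0,2],
    ![0,1,1], ![0,1,2], ![1,1,1], ![1,1,2], ![1,2,1], ![1,2,2]]

def g : Fin 13 → Submodule K V := fun i => span K {r i}

lemma r_ne_zero (i : Fin 13) : r i ≠ 0 := by revert i; decide

lemma exists_rep : ∀ v : V, v ≠ 0 → ∃ (c : K) (i : Fin 13), c ≠ 0 ∧ v = c • r i := by decide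

lemma span_eq_of_rank_one {P : Submodule K V} (h : finrank K P = 1) :
    ∃ i : Fin 13, P = g i := by
  have hbot : P ≠ ⊥ := by
    intro hb
    rw [hb, finrank_bot] at h
    exact absurd h (by norm_num)
  obtain ⟨v, hvP, hv0⟩ := Submodule.exists_mem_ne_zero_of_ne_bot hbot
  obtain ⟨c, i, hc, rfl⟩ := exists_rep v hv0
  refine ⟨i, ?_⟩
  have h1 : span K {c • r i} ≤ P := (span_singleton_le_iff_mem _ _).2 hvP
  have h2 : span K {c • r i} = span K {r i} :=
    span_singleton_smul_eq (isUnit_iff_ne_zero.2 hc) _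
  have h3 : P = span K {c • r i} :=
    (eq_of_le_of_finrank_eq h1 (by rw [finrank_span_singleton hv0, h])).symm
  rw [h3, h2]; rfl

lemma g_inj : Function.Injective g := by
  have key : ∀ i j : Fin 13, ∀ c : K, c • r j = r i → i = j := by decide
  intro i j hij
  have : r i ∈ span K {r j} := by
    rw [show span K {r j} = g j from rfl, ← hij]
    exact mem_span_singleton_self _
  rw [mem_span_singleton] at this
  obtain ⟨c, hc⟩ := this
  exact key i j c hc

lemma g_ne {i j : Fin 13} (h : i ≠ j) : g i ≠ g j := fun he => h (g_inj he)

lemma finrank_span_pair {a b : V} (h : ∀ s t : K, s • a + t • b = 0 → s = 0 ∧ t = 0) :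
    finrank K (span K ({a, b} : Set V)) = 2 := by
  have hli : LinearIndependent K ![a, b] := LinearIndependent.pair_iff.2 h
  have hr : Set.range ![a, b] = ({a, b} : Set V) := by
    ext x; simp [Fin.exists_fin_two]; tauto
  have := finrank_span_eq_card hli
  rw [hr] at this
  simpa using this

lemma points_on_line {a b : V} {i j k l : Fin 13}
    (h : ∀ v : V, (∃ s t : K, s • a + t • b = v) ↔
      (v = 0 ∨ ∃ c : K, c ≠ 0 ∧ (v = c • r i ∨ v = c • r j ∨ v = c • r k ∨ v = c • r l))) :
    {P : Submodule K V | finrank K P = 1 ∧ P ≤ span K ({a, b} : Set V)} =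
      {g i, g j, g k, g l} := by
  ext P
  simp only [Set.mem_setOf_eq, Set.mem_insert_iff, Set.mem_singleton_iff]
  constructor
  · rintro ⟨hP, hle⟩
    obtain ⟨m, rfl⟩ := span_eq_of_rank_one hP
    have hm : r m ∈ span K ({a, b} : Set V) := hle (mem_span_singleton_self _)
    rw [mem_span_pair] at hm
    rcases (h (r m)).1 hm with h0 | ⟨c, hc, hcase⟩
    · exact absurd h0 (r_ne_zero m)
    · have hU : IsUnit c := isUnit_iff_ne_zero.2 hc
      rcases hcase with h1 | h1 | h1 | h1 <;>
        [left; (right; left); (right; right; left); (right; right; right)] <;>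
        · show span K {r m} = _
          rw [h1, span_singleton_smul_eq hU]
          rfl
  · have key : ∀ m : Fin 13, r m ∈ span K ({a, b} : Set V) →
        (finrank K (span K {r m}) = 1 ∧ span K {r m} ≤ span K ({a, b} : Set V)) :=
      fun m hm => ⟨finrank_span_singleton (r_ne_zero m), (span_singleton_le_iff_mem _ _).2 hm⟩
    rintro (rfl | rfl | rfl | rfl) <;> apply key <;> rw [mem_span_pair] <;>
      exact (h _).2 (Or.inr ⟨1, one_ne_zero, by simp⟩)

lemma point_class : {P : Submodule K V | finrank K P = 1} = Set.range g := by
  ext P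
  constructor
  · intro hP; obtain ⟨i, rfl⟩ := span_eq_of_rank_one hP; exact ⟨i, rfl⟩
  · rintro ⟨i, rfl⟩; exact finrank_span_singleton (r_ne_zero i)

lemma set_eq (w : Submodule K V → ℕ) (c : ℕ) :
    {P : Submodule K V | finrank K P = 1 ∧ w P = c} = g '' {i | w (g i) = c} := by
  ext P
  constructor
  · rintro ⟨h1, h2⟩; obtain ⟨i, rfl⟩ := span_eq_of_rank_one h1; exact ⟨i, h2, rfl⟩
  · rintro ⟨i, hi, rfl⟩; exact ⟨finrank_span_singleton (r_ne_zero i), hi⟩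

lemma ncard_level (w : Submodule K V → ℕ) (c : ℕ) :
    {P : Submodule K V | finrank K P = 1 ∧ w P = c}.ncard =
      (Finset.univ.filter fun i : Fin 13 => w (g i) = c).card := by
  rw [set_eq, Set.ncard_image_of_injective _ g_inj, Set.ncard_eq_toFinset_card',
    Set.toFinset_setOf]

lemma finsum_four (f : Submodule K V → ℕ) {A B C D : Submodule K V}
    (hAB : A ≠ B) (hAC : A ≠ C) (hAD : A ≠ D) (hBC : B ≠ C) (hBD : B ≠ D) (hCD : C ≠ D) :
    ∑ᶠ P ∈ ({A, B, C, D} : Set (Submodule K V)), f P = f A + f B + f C + f D := by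
  classical
  rw [show ({A, B, C, D} : Set (Submodule K V)) = (↑({A, B, C, D} : Finset (Submodule K V))) by
    simp]
  rw [finsum_mem_coe_finset,
    Finset.sum_insert (by simp [hAB, hAC, hAD]),
    Finset.sum_insert (by simp [hBC, hBD]),
    Finset.sum_insert (by simp [hCD]), Finset.sum_singleton]
  ring

lemma rank_line_0 : finrank K (span K ({r 1, r 2} : Set V)) = 2 :=
  finrank_span_pair (by decide)

lemma pts_line_0 :
    {P : Submodule K V | finrank K P = 1 ∧ P ≤ span K ({r 1, r 2} : Set V)} =
      {g 1, g 2, g 7, g 8} :=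
  points_on_line (by decide)

lemma rank_line_1 : finrank K (span K ({r 0, r 2} : Set V)) = 2 :=
  finrank_span_pair (by decide)

lemma pts_line_1 :
    {P : Submodule K V | finrank K P = 1 ∧ P ≤ span K ({r 0, r 2} : Set V)} =
      {g 0, g 2, g 5, g 6} :=
  points_on_line (by decide)

lemma rank_line_2 : finrank K (span K ({r 0, r 1} : Set V)) = 2 :=
  finrank_span_pair (by decide)

lemma pts_line_2 :
    {P : Submodule K V | finrank K P = 1 ∧ P ≤ span K ({r 0, r 1} : Set V)} =
      {g 0, g 1, g 3, g 4} :=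
  points_on_line (by decide)

lemma rank_line_3 : finrank K (span K ({r 2, r 4} : Set V)) = 2 :=
  finrank_span_pair (by decide)

lemma pts_line_3 :
    {P : Submodule K V | finrank K P = 1 ∧ P ≤ span K ({r 2, r 4} : Set V)} =
      {g 2, g 4, g 11, g 12} :=
  points_on_line (by decide)

lemma rank_line_4 : finrank K (span K ({r 2, r 3} : Set V)) = 2 :=
  finrank_span_pair (by decide)

lemma pts_line_4 :
    {P : Submodule K V | finrank K P = 1 ∧ P ≤ span K ({r 2, r 3} : Set V)} =
      {g 2, g 3, g 9, g 10} :=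
  points_on_line (by decide)

lemma rank_line_5 : finrank K (span K ({r 1, r 6} : Set V)) = 2 :=
  finrank_span_pair (by decide)

lemma pts_line_5 :
    {P : Submodule K V | finrank K P = 1 ∧ P ≤ span K ({r 1, r 6} : Set V)} =
      {g 1, g 6, g 10, g 12} :=
  points_on_line (by decide)

lemma rank_line_6 : finrank K (span K ({r 1, r 5} : Set V)) = 2 :=
  finrank_span_pair (by decide)

lemma pts_line_6 :
    {P : Submodule K V | finrank K P = 1 ∧ P ≤ span K ({r 1, r 5} : Set V)} =
      {g 1, g 5, g 9, g 11} :=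
  points_on_line (by decide)

lemma rank_line_7 : finrank K (span K ({r 0, r 8} : Set V)) = 2 :=
  finrank_span_pair (by decide)

lemma pts_line_7 :
    {P : Submodule K V | finrank K P = 1 ∧ P ≤ span K ({r 0, r 8} : Set V)} =
      {g 0, g 8, g 10, g 11} :=
  points_on_line (by decide)

lemma rank_line_8 : finrank K (span K ({r 0, r 7} : Set V)) = 2 :=
  finrank_span_pair (by decide)

lemma pts_line_8 :
    {P : Submodule K V | finrank K P = 1 ∧ P ≤ span K ({r 0, r 7} : Set V)} =
      {g 0, g 7, g 9, g 12} :=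
  points_on_line (by decide)

lemma rank_line_9 : finrank K (span K ({r 4, r 6} : Set V)) = 2 :=
  finrank_span_pair (by decide)

lemma pts_line_9 :
    {P : Submodule K V | finrank K P = 1 ∧ P ≤ span K ({r 4, r 6} : Set V)} =
      {g 4, g 6, g 8, g 9} :=
  points_on_line (by decide)

lemma rank_line_10 : finrank K (span K ({r 4, r 5} : Set V)) = 2 :=
  finrank_span_pair (by decide)

lemma pts_line_10 :
    {P : Submodule K V | finrank K P = 1 ∧ P ≤ span K ({r 4, r 5} : Set V)} =
      {g 4, g 5, g 7, g 10} :=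
  points_on_line (by decide)

lemma rank_line_11 : finrank K (span K ({r 3, r 6} : Set V)) = 2 :=
  finrank_span_pair (by decide)

lemma pts_line_11 :
    {P : Submodule K V | finrank K P = 1 ∧ P ≤ span K ({r 3, r 6} : Set V)} =
      {g 3, g 6, g 7, g 11} :=
  points_on_line (by decide)

lemma rank_line_12 : finrank K (span K ({r 3, r 5} : Set V)) = 2 :=
  finrank_span_pair (by decide)

lemma pts_line_12 :
    {P : Submodule K V | finrank K P = 1 ∧ P ≤ span K ({r 3, r 5} : Set V)} =
      {g 3, g 5, g 8, g 12} :=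
  points_on_line (by decide)

end NoWeighting

open NoWeighting

/-- There is no weight function on the points of the projective plane of order 3
(the 1-dimensional subspaces of `F₃³`) taking the value 4 once, the value 2 eight
times and the value 0 four times, such that every line (2-dimensional subspace)
has total weight 4 or 8. -/
theorem no_weighting_4_2x8_0x4 :
    ¬ ∃ w : Submodule (ZMod 3) (Fin 3 → ZMod 3) → ℕ,
      ({P : Submodule (ZMod 3) (Fin 3 → ZMod 3) |
          finrank (ZMod 3) P = 1 ∧ w P = 4}.ncard = 1 ∧
       {P : Submodule (ZMod 3) (Fin 3 → ZMod 3) |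
          finrank (ZMod 3) P = 1 ∧ w P = 2}.ncard = 8 ∧
       {P : Submodule (ZMod 3) (Fin 3 → ZMod 3) |
          finrank (ZMod 3) P = 1 ∧ w P = 0}.ncard = 4) ∧
      (∀ W : Submodule (ZMod 3) (Fin 3 → ZMod 3), finrank (ZMod 3) W = 2 →
        (∑ᶠ P ∈ {P : Submodule (ZMod 3) (Fin 3 → ZMod 3) |
            finrank (ZMod 3) P = 1 ∧ P ≤ W}, w P) = 4 ∨
        (∑ᶠ P ∈ {P : Submodule (ZMod 3) (Fin 3 → ZMod 3) |
            finrank (ZMod 3) P = 1 ∧ P ≤ W}, w P) = 8) := by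
  rintro ⟨w, ⟨h4, h2, h0⟩, hW⟩
  rw [ncard_level w 4] at h4
  rw [ncard_level w 2] at h2
  rw [ncard_level w 0] at h0
  -- the three level finsets partition `univ`
  set f4 := Finset.univ.filter fun i : Fin 13 => w (g i) = 4 with hf4
  set f2 := Finset.univ.filter fun i : Fin 13 => w (g i) = 2 with hf2
  set f0 := Finset.univ.filter fun i : Fin 13 => w (g i) = 0 with hf0
  have hd42 : Disjoint f4 f2 := by
    rw [Finset.disjoint_left]
    intro a ha hb
    rw [hf4, Finset.mem_filter] at ha
    rw [hf2, Finset.mem_filter] at hb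
    omega
  have hd420 : Disjoint (f4 ∪ f2) f0 := by
    rw [Finset.disjoint_left]
    intro a ha hb
    rw [Finset.mem_union, hf4, hf2, Finset.mem_filter, Finset.mem_filter] at ha
    rw [hf0, Finset.mem_filter] at hb
    rcases ha with ha | ha <;> omega
  have huniv : f4 ∪ f2 ∪ f0 = Finset.univ := by
    apply Finset.eq_of_subset_of_card_le (Finset.subset_univ _)
    rw [Finset.card_union_of_disjoint hd420, Finset.card_union_of_disjoint hd42, h4, h2, h0]
    simp
  have e2 : ∑ i : Fin 13, w (g i) = 20 := by
    rw [← huniv, Finset.sum_union hd420, Finset.sum_union hd42]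
    have s4 : ∑ i ∈ f4, w (g i) = 4 := by
      rw [Finset.sum_congr rfl (fun i hi => (Finset.mem_filter.1 hi).2 : ∀ i ∈ f4, w (g i) = 4),
        Finset.sum_const, h4]
      norm_num
    have s2 : ∑ i ∈ f2, w (g i) = 16 := by
      rw [Finset.sum_congr rfl (fun i hi => (Finset.mem_filter.1 hi).2 : ∀ i ∈ f2, w (g i) = 2),
        Finset.sum_const, h2]
      norm_num
    have s0 : ∑ i ∈ f0, w (g i) = 0 := by
      rw [Finset.sum_congr rfl (fun i hi => (Finset.mem_filter.1 hi).2 : ∀ i ∈ f0, w (g i) = 0),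
        Finset.sum_const, h0]
      norm_num
    rw [s4, s2, s0]
  have e1 : ∑ i : Fin 13, w (g i) =
      w (g 0) + w (g 1) + w (g 2) + w (g 3) + w (g 4) + w (g 5) + w (g 6) + w (g 7) +
        w (g 8) + w (g 9) + w (g 10) + w (g 11) + w (g 12) := by
    rw [show (Finset.univ : Finset (Fin 13)) =
      ({0,1,2,3,4,5,6,7,8,9,10,11,12} : Finset (Fin 13)) by decide]
    simp [Finset.sum_insert, Finset.mem_insert]
    ring
  have htot := e1 ▸ e2
  -- some point has weight 2
  have hne : f2.Nonempty := by
    rw [← Finset.card_pos, h2]; norm_num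
  obtain ⟨k, hk⟩ := hne
  rw [hf2, Finset.mem_filter] at hk
  have hk2 : w (g k) = 2 := hk.2
  clear hk huniv hd420 hd42 h4 h2 h0 e1 e2 hf4 hf2 hf0
  have hL0 := hW _ rank_line_0
  rw [pts_line_0, finsum_four w (g_ne (by decide)) (g_ne (by decide)) (g_ne (by decide)) (g_ne (by decide)) (g_ne (by decide)) (g_ne (by decide))] at hL0
  have hL1 := hW _ rank_line_1
  rw [pts_line_1, finsum_four w (g_ne (by decide)) (g_ne (by decide)) (g_ne (by decide)) (g_ne (by decide)) (g_ne (by decide)) (g_ne (by decide))] at hL1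
  have hL2 := hW _ rank_line_2
  rw [pts_line_2, finsum_four w (g_ne (by decide)) (g_ne (by decide)) (g_ne (by decide)) (g_ne (by decide)) (g_ne (by decide)) (g_ne (by decide))] at hL2
  have hL3 := hW _ rank_line_3
  rw [pts_line_3, finsum_four w (g_ne (by decide)) (g_ne (by decide)) (g_ne (by decide)) (g_ne (by decide)) (g_ne (by decide)) (g_ne (by decide))] at hL3
  have hL4 := hW _ rank_line_4
  rw [pts_line_4, finsum_four w (g_ne (by decide)) (g_ne (by decide)) (g_ne (by decide)) (g_ne (by decide)) (g_ne (by decide)) (g_ne (by decide))] at hL4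
  have hL5 := hW _ rank_line_5
  rw [pts_line_5, finsum_four w (g_ne (by decide)) (g_ne (by decide)) (g_ne (by decide)) (g_ne (by decide)) (g_ne (by decide)) (g_ne (by decide))] at hL5
  have hL6 := hW _ rank_line_6
  rw [pts_line_6, finsum_four w (g_ne (by decide)) (g_ne (by decide)) (g_ne (by decide)) (g_ne (by decide)) (g_ne (by decide)) (g_ne (by decide))] at hL6
  have hL7 := hW _ rank_line_7
  rw [pts_line_7, finsum_four w (g_ne (by decide)) (g_ne (by decide)) (g_ne (by decide)) (g_ne (by decide)) (g_ne (by decide)) (g_ne (by decide))] at hL7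
  have hL8 := hW _ rank_line_8
  rw [pts_line_8, finsum_four w (g_ne (by decide)) (g_ne (by decide)) (g_ne (by decide)) (g_ne (by decide)) (g_ne (by decide)) (g_ne (by decide))] at hL8
  have hL9 := hW _ rank_line_9
  rw [pts_line_9, finsum_four w (g_ne (by decide)) (g_ne (by decide)) (g_ne (by decide)) (g_ne (by decide)) (g_ne (by decide)) (g_ne (by decide))] at hL9
  have hL10 := hW _ rank_line_10
  rw [pts_line_10, finsum_four w (g_ne (by decide)) (g_ne (by decide)) (g_ne (by decide)) (g_ne (by decide)) (g_ne (by decide)) (g_ne (by decide))] at hL10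
  have hL11 := hW _ rank_line_11
  rw [pts_line_11, finsum_four w (g_ne (by decide)) (g_ne (by decide)) (g_ne (by decide)) (g_ne (by decide)) (g_ne (by decide)) (g_ne (by decide))] at hL11
  have hL12 := hW _ rank_line_12
  rw [pts_line_12, finsum_four w (g_ne (by decide)) (g_ne (by decide)) (g_ne (by decide)) (g_ne (by decide)) (g_ne (by decide)) (g_ne (by decide))] at hL12
  have hcases : ∀ m : Fin 13, m = 0 ∨ m = 1 ∨ m = 2 ∨ m = 3 ∨ m = 4 ∨ m = 5 ∨ m = 6 ∨
      m = 7 ∨ m = 8 ∨ m = 9 ∨ m = 10 ∨ m = 11 ∨ m = 12 := by decide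
  rcases hcases k with rfl|rfl|rfl|rfl|rfl|rfl|rfl|rfl|rfl|rfl|rfl|rfl|rfl
  · rcases hL1 with h1|h1 <;> rcases hL2 with h2|h2 <;>
      rcases hL7 with h7|h7 <;> rcases hL8 with h8|h8 <;> omega
  · rcases hL0 with h0|h0 <;> rcases hL2 with h2|h2 <;>
      rcases hL5 with h5|h5 <;> rcases hL6 with h6|h6 <;> omega
  · rcases hL0 with h0|h0 <;> rcases hL1 with h1|h1 <;>
      rcases hL3 with h3|h3 <;> rcases hL4 with h4|h4 <;> omega
  · rcases hL2 with h2|h2 <;> rcases hL4 with h4|h4 <;>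
      rcases hL11 with h11|h11 <;> rcases hL12 with h12|h12 <;> omega
  · rcases hL2 with h2|h2 <;> rcases hL3 with h3|h3 <;>
      rcases hL9 with h9|h9 <;> rcases hL10 with h10|h10 <;> omega
  · rcases hL1 with h1|h1 <;> rcases hL6 with h6|h6 <;>
      rcases hL10 with h10|h10 <;> rcases hL12 with h12|h12 <;> omega
  · rcases hL1 with h1|h1 <;> rcases hL5 with h5|h5 <;>
      rcases hL9 with h9|h9 <;> rcases hL11 with h11|h11 <;> omega
  · rcases hL0 with h0|h0 <;> rcases hL8 with h8|h8 <;>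
      rcases hL10 with h10|h10 <;> rcases hL11 with h11|h11 <;> omega
  · rcases hL0 with h0|h0 <;> rcases hL7 with h7|h7 <;>
      rcases hL9 with h9|h9 <;> rcases hL12 with h12|h12 <;> omega
  · rcases hL4 with h4|h4 <;> rcases hL6 with h6|h6 <;>
      rcases hL8 with h8|h8 <;> rcases hL9 with h9|h9 <;> omega
  · rcases hL4 with h4|h4 <;> rcases hL5 with h5|h5 <;>
      rcases hL7 with h7|h7 <;> rcases hL10 with h10|h10 <;> omega
  · rcases hL3 with h3|h3 <;> rcases hL6 with h6|h6 <;>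
      rcases hL7 with h7|h7 <;> rcases hL11 with h11|h11 <;> omega
  · rcases hL3 with h3|h3 <;> rcases hL5 with h5|h5 <;>
      rcases hL8 with h8|h8 <;> rcases hL12 with h12|h12 <;> omega
end
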